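/- arXiv:2410.21694 — 12 statements merged into one kernel-verified Lean document; each statement's English description precedes it below -/
import Mathlib

section
/- Suppose the experiment Π = (S, π) is a weighted garbling of the experiment Π' = (S', π') with weight γ ∈ Γ(Π'), and let γ̄ = max_{s'∈S'} γ(s'). Then Π' is (1/γ̄)-conditionally more informative than Π; concretely, the experiment Π'' on S' × {0,1} defined by π''(s',1|θ) = γ(s')π'(s'|θ)/γ̄ and π''(s',0|θ) = π'(s'|θ) − π''(s',1|θ) is a well-defined experiment whose marginal on S' equals π', satisfies ∑_{s'} π''(s',1|θ) = 1/γ̄ for every θ, satisfies π''(s',1|θ) = π'(s'|θ)·(γ(s')/γ̄) for all s',θ, and its conditional-on-1 experiment π''(s'|1,θ) = γ(s')π'(s'|θ) is such that Π is a garbling of it. -/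
/-!
Thin the finer experiment: after observing `s'`, keep it (flag `true`) with probability
`γ s' / γ̄ ≤ 1` and discard it otherwise. The flag `true` then occurs with total probability
`∑ γ π' / γ̄ = 1 / γ̄`, and conditionally on it the signal has law `γ π'`, which is the
experiment that `Π` garbles by assumption.
-/

section SplitByWeight

variable {ι : Type*} (w : ι → ℝ) (c : ℝ) (p : ι → ℝ)

noncomputable def splitByWeight : ι × Bool → ℝ := fun x =>
  if x.2 then w x.1 * p x.1 / c else p x.1 - w x.1 * p x.1 / c

lemma splitByWeight_true (i : ι) : splitByWeight w c p (i, true) = p i * (w i / c) := by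
  simp only [splitByWeight, if_true]
  ring

lemma splitByWeight_false_add_true (i : ι) :
    splitByWeight w c p (i, false) + splitByWeight w c p (i, true) = p i := by
  simp only [splitByWeight, Bool.false_eq_true, if_false, if_true]
  ring

lemma splitByWeight_nonneg {w p} (hw0 : ∀ i, 0 ≤ w i) (hwc : ∀ i, w i ≤ c)
    (hp0 : ∀ i, 0 ≤ p i) (x : ι × Bool) : 0 ≤ splitByWeight w c p x := by
  obtain ⟨i, b⟩ := x
  have hc : 0 ≤ c := (hw0 i).trans (hwc i)
  cases b
  · have hkept : w i * p i / c ≤ p i :=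
      div_le_of_le_mul₀ hc (hp0 i) (by nlinarith [hwc i, hp0 i])
    simpa [splitByWeight] using hkept
  · simpa [splitByWeight] using div_nonneg (mul_nonneg (hw0 i) (hp0 i)) hc

variable [Fintype ι]

lemma sum_splitByWeight : ∑ x, splitByWeight w c p x = ∑ i, p i := by
  simp only [Fintype.sum_prod_type, Fintype.sum_bool, add_comm (splitByWeight w c p (_, true)),
    splitByWeight_false_add_true]

lemma sum_splitByWeight_true :
    ∑ i, splitByWeight w c p (i, true) = (∑ i, w i * p i) / c := by
  simp only [splitByWeight, if_true, Finset.sum_div]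

end SplitByWeight

theorem weighted_garbling_implies_conditionally_more_informative_general
    {Θ S S' : Type*}
    [Fintype S] [Fintype S']
    (π : S → Θ → ℝ) (π' : S' → Θ → ℝ)
    (hπ'0 : ∀ s' θ, 0 ≤ π' s' θ) (hπ'1 : ∀ θ, ∑ s', π' s' θ = 1)
    (γ : S' → ℝ) (hγ0 : ∀ s', 0 ≤ γ s')
    (hγ1 : ∀ θ, ∑ s', γ s' * π' s' θ = 1)
    (φ : S' → S → ℝ) (hφ0 : ∀ s' s, 0 ≤ φ s' s) (hφ1 : ∀ s', ∑ s, φ s' s = 1)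
    (hwg : ∀ s θ, π s θ = ∑ s', φ s' s * γ s' * π' s' θ)
    (γbar : ℝ) (hγbar : IsGreatest (Set.range γ) γbar) :
    ∀ π'' : S' × Bool → Θ → ℝ,
      (π'' = fun p θ => if p.2 then γ p.1 * π' p.1 θ / γbar
                        else π' p.1 θ - γ p.1 * π' p.1 θ / γbar) →
      -- Π'' is a well-defined experiment
      (∀ p θ, 0 ≤ π'' p θ) ∧ (∀ θ, ∑ p : S' × Bool, π'' p θ = 1) ∧
      -- its marginal on S' equals π'
      (∀ s' θ, π'' (s', false) θ + π'' (s', true) θ = π' s' θ) ∧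
      -- ∑_{s'} π''(s',1|θ) = 1/γ̄ for every θ
      (∀ θ, ∑ s', π'' (s', true) θ = 1 / γbar) ∧
      -- π''(s',1|θ) = π'(s'|θ)·(γ(s')/γ̄)
      (∀ s' θ, π'' (s', true) θ = π' s' θ * (γ s' / γbar)) ∧
      -- Π is a garbling of the conditional-on-1 experiment π''(s'|1,θ) = γ(s')π'(s'|θ)
      (∃ ψ : S' → S → ℝ, (∀ s' s, 0 ≤ ψ s' s) ∧ (∀ s', ∑ s, ψ s' s = 1) ∧
        ∀ s θ, π s θ = ∑ s', ψ s' s * (γ s' * π' s' θ)) := by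
  intro π'' hπ''
  obtain rfl : π'' = fun x θ => splitByWeight γ γbar (π' · θ) x := hπ''
  beta_reduce
  have hle : ∀ s', γ s' ≤ γbar := fun s' => hγbar.2 ⟨s', rfl⟩
  refine ⟨fun x θ => splitByWeight_nonneg γbar hγ0 hle (hπ'0 · θ) x,
    fun θ => (sum_splitByWeight ..).trans (hπ'1 θ),
    fun s' θ => splitByWeight_false_add_true ..,
    fun θ => (sum_splitByWeight_true ..).trans (by rw [hγ1 θ]),
    fun s' θ => splitByWeight_true .., φ, hφ0, hφ1, fun s θ => ?_⟩
  simp only [hwg, mul_assoc]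

/-- If Π = (S, π) is a weighted garbling of Π' = (S', π') with weight γ and
γ̄ = max γ, then the experiment Π'' on S' × Bool defined by
π''(s',1|θ) = γ(s')π'(s'|θ)/γ̄ and π''(s',0|θ) = π'(s'|θ) − π''(s',1|θ)
is a well-defined experiment whose marginal on S' is π', with
∑_{s'} π''(s',1|θ) = 1/γ̄, π''(s',1|θ) = π'(s'|θ)·(γ(s')/γ̄), and Π is a garbling
of the conditional-on-1 experiment π''(s'|1,θ) = γ(s')π'(s'|θ). -/
theorem weighted_garbling_implies_conditionally_more_informative
    {Θ S S' : Type*} [Fintype Θ] [Nonempty Θ]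
    [Fintype S] [Nonempty S] [Fintype S'] [Nonempty S']
    (π : S → Θ → ℝ) (π' : S' → Θ → ℝ)
    (hπ0 : ∀ s θ, 0 ≤ π s θ) (hπ1 : ∀ θ, ∑ s, π s θ = 1)
    (hπ'0 : ∀ s' θ, 0 ≤ π' s' θ) (hπ'1 : ∀ θ, ∑ s', π' s' θ = 1)
    (γ : S' → ℝ) (hγ0 : ∀ s', 0 ≤ γ s')
    (hγ1 : ∀ θ, ∑ s', γ s' * π' s' θ = 1)
    (φ : S' → S → ℝ) (hφ0 : ∀ s' s, 0 ≤ φ s' s) (hφ1 : ∀ s', ∑ s, φ s' s = 1)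
    (hwg : ∀ s θ, π s θ = ∑ s', φ s' s * γ s' * π' s' θ)
    (γbar : ℝ) (hγbar : IsGreatest (Set.range γ) γbar) :
    ∀ π'' : S' × Bool → Θ → ℝ,
      (π'' = fun p θ => if p.2 then γ p.1 * π' p.1 θ / γbar
                        else π' p.1 θ - γ p.1 * π' p.1 θ / γbar) →
      -- Π'' is a well-defined experiment
      (∀ p θ, 0 ≤ π'' p θ) ∧ (∀ θ, ∑ p : S' × Bool, π'' p θ = 1) ∧
      -- its marginal on S' equals π'
      (∀ s' θ, π'' (s', false) θ + π'' (s', true) θ = π' s' θ) ∧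
      -- ∑_{s'} π''(s',1|θ) = 1/γ̄ for every θ
      (∀ θ, ∑ s', π'' (s', true) θ = 1 / γbar) ∧
      -- π''(s',1|θ) = π'(s'|θ)·(γ(s')/γ̄)
      (∀ s' θ, π'' (s', true) θ = π' s' θ * (γ s' / γbar)) ∧
      -- Π is a garbling of the conditional-on-1 experiment π''(s'|1,θ) = γ(s')π'(s'|θ)
      (∃ ψ : S' → S → ℝ, (∀ s' s, 0 ≤ ψ s' s) ∧ (∀ s', ∑ s, ψ s' s = 1) ∧
        ∀ s θ, π s θ = ∑ s', ψ s' s * (γ s' * π' s' θ)) :=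
  weighted_garbling_implies_conditionally_more_informative_general π π' hπ'0 hπ'1 γ hγ0 hγ1 φ hφ0
    hφ1 hwg γbar hγbar
end

section
/- Suppose the experiment Π' = (S', π') is α-conditionally more informative than the experiment Π = (S, π), witnessed by an experiment Π'' on S' × {0,1} and a function κ: S' → [0,1] with π''(s',1|θ) = π'(s'|θ)κ(s') and ∑_{s'} π''(s',1|θ) = α for all θ, such that Π is a garbling of the conditional experiment (S', π''(·|1,·)). Then the function γ(s') = κ(s')/α is a weight in Γ(Π') and Π is a weighted garbling of Π' with weight γ, whose size is (1/α)·max_{s'∈S'} κ(s'); in particular, if κ(s') = 1 for some s', the size is 1/α. -/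
open Finset

/- A weighted garbling with weight γ is an ordinary garbling of the "reweighted" measure
γ(s') π'(s'|θ). Here π''(s',1|θ) = π'(s'|θ) κ(s') has total mass α in every state, so
γ = κ/α reweights π' to exactly the conditional experiment π''(·|1,·), of which Π is a
garbling by assumption; the size of γ is max κ / α. -/

theorem sum_div_mul_eq_one_of_sum_mul_eq {ι : Type*} [Fintype ι] {p κ : ι → ℝ} {α : ℝ}
    (hα : α ≠ 0) (h : ∑ i, p i * κ i = α) : ∑ i, κ i / α * p i = 1 := by
  calc ∑ i, κ i / α * p i = (∑ i, p i * κ i) / α := by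
        rw [sum_div]; exact sum_congr rfl fun i _ => by ring
    _ = 1 := by rw [h, div_self hα]

theorem IsGreatest.range_div {ι : Type*} {f : ι → ℝ} {m c : ℝ} (hc : 0 < c)
    (h : IsGreatest (Set.range f) m) :
    IsGreatest (Set.range fun i => f i / c) (1 / c * m) := by
  have hmono : Monotone fun x : ℝ => x / c := fun _ _ hxy => div_le_div_of_nonneg_right hxy hc.le
  rw [one_div_mul_eq_div, show (fun i => f i / c) = (· / c) ∘ f from rfl, Set.range_comp]
  exact hmono.map_isGreatest h

theorem conditionally_more_informative_implies_weighted_garbling_general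
    {Θ S S' : Type*}
    [Fintype S] [Fintype S']
    (π : S → Θ → ℝ) (π' : S' → Θ → ℝ)
    (α : ℝ) (hα0 : 0 < α)
    (π'' : S' × Bool → Θ → ℝ)
    -- (ii) ∑_{s'} π''(s',1|θ) = α for every θ
    (hsum : ∀ θ, ∑ s', π'' (s', true) θ = α)
    -- (iii) κ : S' → [0,1] with π''(s',1|θ) = π'(s'|θ)κ(s')
    (κ : S' → ℝ) (hκ0 : ∀ s', 0 ≤ κ s') (hκ1 : ∀ s', κ s' ≤ 1)
    (hκ : ∀ s' θ, π'' (s', true) θ = π' s' θ * κ s')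
    -- (iv) Π is a garbling of the conditional experiment (S', π''(·|1,·))
    (ψ : S' → S → ℝ) (hψ0 : ∀ s' s, 0 ≤ ψ s' s) (hψ1 : ∀ s', ∑ s, ψ s' s = 1)
    (hgarb : ∀ s θ, π s θ = ∑ s', ψ s' s * (π'' (s', true) θ / α)) :
    -- γ = κ/α is a weight in Γ(Π')
    (∀ s', 0 ≤ κ s' / α) ∧
    (∀ θ, ∑ s', (κ s' / α) * π' s' θ = 1) ∧
    -- Π is a weighted garbling of Π' with weight γ
    (∃ φ : S' → S → ℝ, (∀ s' s, 0 ≤ φ s' s) ∧ (∀ s', ∑ s, φ s' s = 1) ∧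
      ∀ s θ, π s θ = ∑ s', φ s' s * (κ s' / α) * π' s' θ) ∧
    -- the size of this weighted garbling is (1/α)·max_{s'} κ(s')
    (∀ κmax : ℝ, IsGreatest (Set.range κ) κmax →
      IsGreatest (Set.range fun s' => κ s' / α) ((1 / α) * κmax)) ∧
    -- in particular, if κ(s') = 1 for some s', the size is 1/α
    ((∃ s', κ s' = 1) →
      IsGreatest (Set.range fun s' => κ s' / α) (1 / α)) := by
  have hmass : ∀ θ, ∑ s', π' s' θ * κ s' = α := fun θ => by simpa only [hκ] using hsum θ
  refine ⟨fun s' => div_nonneg (hκ0 s') hα0.le,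
    fun θ => sum_div_mul_eq_one_of_sum_mul_eq hα0.ne' (hmass θ),
    ⟨ψ, hψ0, hψ1, fun s θ => ?_⟩, fun κmax hmax => hmax.range_div hα0, ?_⟩
  · rw [hgarb s θ]
    exact sum_congr rfl fun s' _ => by rw [hκ]; ring
  · rintro ⟨s₁, hs₁⟩
    have hmax : IsGreatest (Set.range κ) 1 :=
      ⟨⟨s₁, hs₁⟩, by rintro _ ⟨s', rfl⟩; exact hκ1 s'⟩
    simpa only [mul_one] using hmax.range_div hα0

/-- If Π' is α-conditionally more informative than Π, witnessed by an
experiment Π'' on S' × Bool and κ : S' → [0,1] with π''(s',1|θ) = π'(s'|θ)κ(s') and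
∑_{s'} π''(s',1|θ) = α, and Π is a garbling of the conditional experiment
π''(·|1,·) = π''(·,1|·)/α, then γ(s') = κ(s')/α is a weight in Γ(Π') and Π is a
weighted garbling of Π' with weight γ of size (1/α)·max κ; in particular, if
κ(s') = 1 for some s', the size is 1/α. -/
theorem conditionally_more_informative_implies_weighted_garbling
    {Θ S S' : Type*} [Fintype Θ] [Nonempty Θ]
    [Fintype S] [Nonempty S] [Fintype S'] [Nonempty S']
    (π : S → Θ → ℝ) (π' : S' → Θ → ℝ)
    (hπ0 : ∀ s θ, 0 ≤ π s θ) (hπ1 : ∀ θ, ∑ s, π s θ = 1)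
    (hπ'0 : ∀ s' θ, 0 ≤ π' s' θ) (hπ'1 : ∀ θ, ∑ s', π' s' θ = 1)
    (α : ℝ) (hα0 : 0 < α) (hα1 : α ≤ 1)
    (π'' : S' × Bool → Θ → ℝ)
    (hπ''0 : ∀ p θ, 0 ≤ π'' p θ) (hπ''1 : ∀ θ, ∑ p : S' × Bool, π'' p θ = 1)
    -- (i) the marginal of Π'' on S' is π'
    (hmarg : ∀ s' θ, π'' (s', false) θ + π'' (s', true) θ = π' s' θ)
    -- (ii) ∑_{s'} π''(s',1|θ) = α for every θ
    (hsum : ∀ θ, ∑ s', π'' (s', true) θ = α)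
    -- (iii) κ : S' → [0,1] with π''(s',1|θ) = π'(s'|θ)κ(s')
    (κ : S' → ℝ) (hκ0 : ∀ s', 0 ≤ κ s') (hκ1 : ∀ s', κ s' ≤ 1)
    (hκ : ∀ s' θ, π'' (s', true) θ = π' s' θ * κ s')
    -- (iv) Π is a garbling of the conditional experiment (S', π''(·|1,·))
    (ψ : S' → S → ℝ) (hψ0 : ∀ s' s, 0 ≤ ψ s' s) (hψ1 : ∀ s', ∑ s, ψ s' s = 1)
    (hgarb : ∀ s θ, π s θ = ∑ s', ψ s' s * (π'' (s', true) θ / α)) :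
    -- γ = κ/α is a weight in Γ(Π')
    (∀ s', 0 ≤ κ s' / α) ∧
    (∀ θ, ∑ s', (κ s' / α) * π' s' θ = 1) ∧
    -- Π is a weighted garbling of Π' with weight γ
    (∃ φ : S' → S → ℝ, (∀ s' s, 0 ≤ φ s' s) ∧ (∀ s', ∑ s, φ s' s = 1) ∧
      ∀ s θ, π s θ = ∑ s', φ s' s * (κ s' / α) * π' s' θ) ∧
    -- the size of this weighted garbling is (1/α)·max_{s'} κ(s')
    (∀ κmax : ℝ, IsGreatest (Set.range κ) κmax →
      IsGreatest (Set.range fun s' => κ s' / α) ((1 / α) * κmax)) ∧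
    -- in particular, if κ(s') = 1 for some s', the size is 1/α
    ((∃ s', κ s' = 1) →
      IsGreatest (Set.range fun s' => κ s' / α) (1 / α)) :=
  conditionally_more_informative_implies_weighted_garbling_general π π' α hα0 π'' hsum κ hκ0 hκ1 hκ
    ψ hψ0 hψ1 hgarb
end

section
/- (Transitivity of weighted garbling.) Suppose Π = (S, π) is a weighted garbling of Π' = (S', π') with weight γ₁ of size β₁, and Π' is a weighted garbling of Π'' = (S'', π'') with weight γ₂ of size β₂. Then Π is a weighted garbling of Π'' with some weight γ̂ ∈ Γ(Π'') satisfying max_{s''∈S''} γ̂(s'') ≤ β₁β₂; explicitly, γ̂(s'') = γ₂(s'') ∑_{s'∈S'} γ₁(s') φ₂(s'|s''), where φ₂ is the stochastic map witnessing that Π' is a weighted garbling of Π''. -/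
/-- Transitivity of weighted garbling: if Π is a weighted garbling of Π'
with weight γ₁ of size β₁ and Π' is a weighted garbling of Π'' with weight γ₂ of size β₂
(witnessed by φ₂), then Π is a weighted garbling of Π'' with the weight
γ̂(s'') = γ₂(s'')·∑_{s'} γ₁(s')φ₂(s'|s''), which satisfies max γ̂ ≤ β₁β₂. -/
theorem weighted_garbling_trans
    {Θ S S' S'' : Type*} [Fintype Θ] [Nonempty Θ]
    [Fintype S] [Nonempty S] [Fintype S'] [Nonempty S'] [Fintype S''] [Nonempty S'']
    (π : S → Θ → ℝ) (π' : S' → Θ → ℝ) (π'' : S'' → Θ → ℝ)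
    (hπ0 : ∀ s θ, 0 ≤ π s θ) (hπ1 : ∀ θ, ∑ s, π s θ = 1)
    (hπ'0 : ∀ s' θ, 0 ≤ π' s' θ) (hπ'1 : ∀ θ, ∑ s', π' s' θ = 1)
    (hπ''0 : ∀ s'' θ, 0 ≤ π'' s'' θ) (hπ''1 : ∀ θ, ∑ s'', π'' s'' θ = 1)
    -- Π is a weighted garbling of Π' with weight γ₁ of size β₁
    (γ₁ : S' → ℝ) (hγ₁0 : ∀ s', 0 ≤ γ₁ s') (hγ₁1 : ∀ θ, ∑ s', γ₁ s' * π' s' θ = 1)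
    (β₁ : ℝ) (hβ₁ : IsGreatest (Set.range γ₁) β₁)
    (φ₁ : S' → S → ℝ) (hφ₁0 : ∀ s' s, 0 ≤ φ₁ s' s) (hφ₁1 : ∀ s', ∑ s, φ₁ s' s = 1)
    (hwg₁ : ∀ s θ, π s θ = ∑ s', φ₁ s' s * γ₁ s' * π' s' θ)
    -- Π' is a weighted garbling of Π'' with weight γ₂ of size β₂, witnessed by φ₂
    (γ₂ : S'' → ℝ) (hγ₂0 : ∀ s'', 0 ≤ γ₂ s'') (hγ₂1 : ∀ θ, ∑ s'', γ₂ s'' * π'' s'' θ = 1)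
    (β₂ : ℝ) (hβ₂ : IsGreatest (Set.range γ₂) β₂)
    (φ₂ : S'' → S' → ℝ) (hφ₂0 : ∀ s'' s', 0 ≤ φ₂ s'' s') (hφ₂1 : ∀ s'', ∑ s', φ₂ s'' s' = 1)
    (hwg₂ : ∀ s' θ, π' s' θ = ∑ s'', φ₂ s'' s' * γ₂ s'' * π'' s'' θ) :
    ∀ γhat : S'' → ℝ,
      (γhat = fun s'' => γ₂ s'' * ∑ s', γ₁ s' * φ₂ s'' s') →
      -- γ̂ is a weight in Γ(Π'')
      (∀ s'', 0 ≤ γhat s'') ∧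
      (∀ θ, ∑ s'', γhat s'' * π'' s'' θ = 1) ∧
      -- Π is a weighted garbling of Π'' with weight γ̂
      (∃ φ : S'' → S → ℝ, (∀ s'' s, 0 ≤ φ s'' s) ∧ (∀ s'', ∑ s, φ s'' s = 1) ∧
        ∀ s θ, π s θ = ∑ s'', φ s'' s * γhat s'' * π'' s'' θ) ∧
      -- whose size is at most β₁β₂
      (∀ s'', γhat s'' ≤ β₁ * β₂) := by
  intro γhat hγhat
  subst hγhat
  set D : S'' → ℝ := fun s'' => ∑ s', γ₁ s' * φ₂ s'' s' with hD
  have hD0 : ∀ s'', 0 ≤ D s'' := fun s'' =>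
    Finset.sum_nonneg fun s' _ => mul_nonneg (hγ₁0 s') (hφ₂0 s'' s')
  have hβ₁0 : 0 ≤ β₁ := by
    obtain ⟨s', hs'⟩ := hβ₁.1
    exact hs' ▸ hγ₁0 s'
  have hβ₂0 : 0 ≤ β₂ := by
    obtain ⟨s'', hs''⟩ := hβ₂.1
    exact hs'' ▸ hγ₂0 s''
  have hγ₁le : ∀ s', γ₁ s' ≤ β₁ := fun s' => hβ₁.2 ⟨s', rfl⟩
  have hγ₂le : ∀ s'', γ₂ s'' ≤ β₂ := fun s'' => hβ₂.2 ⟨s'', rfl⟩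
  refine ⟨fun s'' => mul_nonneg (hγ₂0 s'') (hD0 s''), ?_, ?_, ?_⟩
  · -- weight condition
    intro θ
    have : ∑ s'', (γ₂ s'' * D s'') * π'' s'' θ
        = ∑ s', γ₁ s' * π' s' θ := by
      simp only [hD, Finset.sum_mul, Finset.mul_sum, hwg₂]
      rw [Finset.sum_comm]
      apply Finset.sum_congr rfl
      intro s' _
      apply Finset.sum_congr rfl
      intro s'' _
      ring
    rw [this, hγ₁1]
  · -- garbling map
    classical
    obtain ⟨a⟩ := ‹Nonempty S'›
    refine ⟨fun s'' s => if D s'' = 0 then φ₁ a s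
      else (∑ s', φ₁ s' s * γ₁ s' * φ₂ s'' s') / D s'', ?_, ?_, ?_⟩
    · intro s'' s
      by_cases h : D s'' = 0
      · simp [h, hφ₁0]
      · simp only [h, if_false]
        exact div_nonneg (Finset.sum_nonneg fun s' _ =>
          mul_nonneg (mul_nonneg (hφ₁0 s' s) (hγ₁0 s')) (hφ₂0 s'' s')) (hD0 s'')
    · intro s''
      by_cases h : D s'' = 0
      · simp [h, hφ₁1]
      · simp only [h, if_false]
        rw [← Finset.sum_div, Finset.sum_comm]
        have : ∑ s', ∑ s, φ₁ s' s * γ₁ s' * φ₂ s'' s' = D s'' := by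
          apply Finset.sum_congr rfl
          intro s' _
          rw [← Finset.sum_mul, ← Finset.sum_mul, hφ₁1, one_mul]
        rw [this, div_self h]
    · intro s θ
      have key : ∀ s'', (if D s'' = 0 then φ₁ a s
            else (∑ s', φ₁ s' s * γ₁ s' * φ₂ s'' s') / D s'') * (γ₂ s'' * D s'')
          = ∑ s', φ₁ s' s * γ₁ s' * φ₂ s'' s' * γ₂ s'' := by
        intro s''
        by_cases h : D s'' = 0
        · have hz : ∀ s' ∈ Finset.univ, γ₁ s' * φ₂ s'' s' = 0 := by
            rw [← Finset.sum_eq_zero_iff_of_nonneg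
              (fun s' _ => mul_nonneg (hγ₁0 s') (hφ₂0 s'' s'))]
            exact h
          simp only [h, if_true, mul_zero, mul_zero]
          symm
          apply Finset.sum_eq_zero
          intro s' hs'
          have := hz s' hs'
          calc φ₁ s' s * γ₁ s' * φ₂ s'' s' * γ₂ s''
              = φ₁ s' s * (γ₁ s' * φ₂ s'' s') * γ₂ s'' := by ring
            _ = 0 := by rw [this]; ring
        · simp only [h, if_false]
          field_simp
          rw [Finset.sum_mul]
          apply Finset.sum_congr rfl
          intro s' _
          ring
      calc π s θ = ∑ s', φ₁ s' s * γ₁ s' * π' s' θ := hwg₁ s θ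
        _ = ∑ s', φ₁ s' s * γ₁ s' * ∑ s'', φ₂ s'' s' * γ₂ s'' * π'' s'' θ := by
            simp only [hwg₂]
        _ = ∑ s'', (∑ s', φ₁ s' s * γ₁ s' * φ₂ s'' s' * γ₂ s'') * π'' s'' θ := by
            simp only [Finset.mul_sum, Finset.sum_mul]
            rw [Finset.sum_comm]
            apply Finset.sum_congr rfl; intro s' _
            apply Finset.sum_congr rfl; intro s'' _
            ring
        _ = ∑ s'', (if D s'' = 0 then φ₁ a s
              else (∑ s', φ₁ s' s * γ₁ s' * φ₂ s'' s') / D s'') * (γ₂ s'' * D s'')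
              * π'' s'' θ := by
            apply Finset.sum_congr rfl
            intro s'' _
            rw [key s'']
  · -- size bound
    intro s''
    have hDle : D s'' ≤ β₁ := by
      calc D s'' ≤ ∑ s', β₁ * φ₂ s'' s' :=
            Finset.sum_le_sum fun s' _ =>
              mul_le_mul_of_nonneg_right (hγ₁le s') (hφ₂0 s'' s')
        _ = β₁ := by rw [← Finset.mul_sum, hφ₂1, mul_one]
    calc γ₂ s'' * D s'' ≤ β₂ * β₁ :=
          mul_le_mul (hγ₂le s'') hDle (hD0 s'') hβ₂0
      _ = β₁ * β₂ := mul_comm _ _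
end

section
/- Let Π' = (S', π') be a regular experiment and suppose Π = (S, π) is a weighted garbling of Π' with weight γ ∈ Γ(Π') of size β = max_{s'} γ(s'). Then for every full-support prior μ0 ∈ Δ(Θ) there exists a finitely supported joint probability distribution f on Δ(Θ) × Δ(Θ) such that: (1) for every μ in the support of the first marginal of f, ∑_{μ'} μ'·f(μ'|μ) = μ (the conditional distribution over second coordinates has barycenter μ); (2) the first marginal of f equals q^Π_{μ0}; and (3) the second marginal of f is supported on supp(q^{Π'}_{μ0}) and max_{μ' ∈ supp(q^{Π'}_{μ0})} f(μ') / q^{Π'}_{μ0}(μ') = β, where f(μ') denotes the second marginal of f. -/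
open scoped Classical

/-- The posterior belief on Θ induced by experiment π, prior μ0 and signal s. -/
noncomputable def posterior {Θ S : Type*} [Fintype Θ]
    (π : S → Θ → ℝ) (μ0 : Θ → ℝ) (s : S) : Θ → ℝ :=
  fun θ => π s θ * μ0 θ / ∑ θ', π s θ' * μ0 θ'

/-- The distribution over posterior beliefs induced by experiment π and prior μ0:
q^Π_{μ0}(μ) = ∑_{s : μ^Π_s = μ} Pr_Π(s). -/
noncomputable def qdist {Θ S : Type*} [Fintype Θ] [Fintype S]
    (π : S → Θ → ℝ) (μ0 : Θ → ℝ) (μ : Θ → ℝ) : ℝ :=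
  ∑ s, if posterior π μ0 s = μ then ∑ θ, π s θ * μ0 θ else 0

/-- First marginal of a finitely supported joint distribution on Δ(Θ) × Δ(Θ). -/
noncomputable def marg1 {Θ : Type*} (f : ((Θ → ℝ) × (Θ → ℝ)) →₀ ℝ) (μ : Θ → ℝ) : ℝ :=
  f.sum fun p v => if p.1 = μ then v else 0

/-- Second marginal of a finitely supported joint distribution on Δ(Θ) × Δ(Θ). -/
noncomputable def marg2 {Θ : Type*} (f : ((Θ → ℝ) × (Θ → ℝ)) →₀ ℝ) (μ' : Θ → ℝ) : ℝ :=
  f.sum fun p v => if p.2 = μ' then v else 0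

/-- Auxiliary: the `Finsupp.sum` of a double finite sum of singles. -/
lemma finsupp_sum_sum_single {ι κ α N : Type*} [Fintype ι] [Fintype κ] [AddCommMonoid N]
    (a : ι → κ → α) (b : ι → κ → ℝ) (h : α → ℝ → N)
    (h0 : ∀ x, h x 0 = 0) (hadd : ∀ x m₁ m₂, h x (m₁ + m₂) = h x m₁ + h x m₂) :
    ((∑ i : ι, ∑ j : κ, Finsupp.single (a i j) (b i j)).sum h)
      = ∑ i : ι, ∑ j : κ, h (a i j) (b i j) := by
  rw [← Finsupp.sum_finsetSum_index h0 hadd]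
  refine Finset.sum_congr rfl fun i _ => ?_
  rw [← Finsupp.sum_finsetSum_index h0 hadd]
  exact Finset.sum_congr rfl fun j _ => Finsupp.sum_single_index (h0 _)

/-- "only if" part of Theorem 1: if Π is a weighted garbling of a regular
Π' with weight γ of size β, then for every full-support prior μ0 there is a finitely
supported joint probability distribution f on Δ(Θ) × Δ(Θ) such that (1) conditionals
have barycenter equal to the conditioning belief, (2) the first marginal is q^Π_{μ0},
and (3) the second marginal is supported on supp(q^{Π'}_{μ0}) with
max_{μ'} f(μ')/q^{Π'}_{μ0}(μ') = β. -/
theorem weighted_garbling_only_if_joint_distribution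
    {Θ S S' : Type*} [Fintype Θ] [Nonempty Θ]
    [Fintype S] [Nonempty S] [Fintype S'] [Nonempty S']
    (π : S → Θ → ℝ) (π' : S' → Θ → ℝ)
    (hπ0 : ∀ s θ, 0 ≤ π s θ) (hπ1 : ∀ θ, ∑ s, π s θ = 1)
    (hπ'0 : ∀ s' θ, 0 ≤ π' s' θ) (hπ'1 : ∀ θ, ∑ s', π' s' θ = 1)
    -- Π' is regular
    (hreg1 : ∀ s', ∃ θ, 0 < π' s' θ)
    (hreg2 : ∀ s₁' s₂' : S', s₁' ≠ s₂' → ¬ ∃ c : ℝ, ∀ θ, π' s₂' θ = c * π' s₁' θ)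
    -- Π is a weighted garbling of Π' with weight γ of size β
    (γ : S' → ℝ) (hγ0 : ∀ s', 0 ≤ γ s') (hγ1 : ∀ θ, ∑ s', γ s' * π' s' θ = 1)
    (β : ℝ) (hβ : IsGreatest (Set.range γ) β)
    (φ : S' → S → ℝ) (hφ0 : ∀ s' s, 0 ≤ φ s' s) (hφ1 : ∀ s', ∑ s, φ s' s = 1)
    (hwg : ∀ s θ, π s θ = ∑ s', φ s' s * γ s' * π' s' θ)
    -- full-support prior μ0
    (μ0 : Θ → ℝ) (hμ0 : ∀ θ, 0 < μ0 θ) (hμ0sum : ∑ θ, μ0 θ = 1) :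
    ∃ f : ((Θ → ℝ) × (Θ → ℝ)) →₀ ℝ,
      -- f is a probability distribution
      (∀ p, 0 ≤ f p) ∧ (f.sum fun _ v => v) = 1 ∧
      -- (1) for every μ in the support of the first marginal,
      --     ∑_{μ'} μ'·f(μ'|μ) = μ
      (∀ μ : Θ → ℝ, marg1 f μ ≠ 0 → ∀ θ,
        (f.sum fun p v => if p.1 = μ then v * p.2 θ else 0) / marg1 f μ = μ θ) ∧
      -- (2) the first marginal of f equals q^Π_{μ0}
      (∀ μ : Θ → ℝ, marg1 f μ = qdist π μ0 μ) ∧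
      -- (3) the second marginal is supported on supp(q^{Π'}_{μ0}) and
      --     max_{μ' ∈ supp(q^{Π'}_{μ0})} f(μ')/q^{Π'}_{μ0}(μ') = β
      (∀ μ' : Θ → ℝ, marg2 f μ' ≠ 0 → qdist π' μ0 μ' ≠ 0) ∧
      IsGreatest {r : ℝ | ∃ μ' : Θ → ℝ, qdist π' μ0 μ' ≠ 0 ∧
        r = marg2 f μ' / qdist π' μ0 μ'} β := by
  -- Notation
  set Pr' : S' → ℝ := fun s' => ∑ θ, π' s' θ * μ0 θ with hPr'def
  set Pr : S → ℝ := fun s => ∑ θ, π s θ * μ0 θ with hPrdef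
  set w : S → S' → ℝ := fun s s' => φ s' s * γ s' * Pr' s' with hwdef
  -- Pr' is positive
  have hPr'pos : ∀ s', 0 < Pr' s' := by
    intro s'
    obtain ⟨θ₀, hθ₀⟩ := hreg1 s'
    exact Finset.sum_pos' (fun θ _ => mul_nonneg (hπ'0 s' θ) (hμ0 θ).le)
      ⟨θ₀, Finset.mem_univ θ₀, mul_pos hθ₀ (hμ0 θ₀)⟩
  have hwnn : ∀ s s', 0 ≤ w s s' :=
    fun s s' => mul_nonneg (mul_nonneg (hφ0 s' s) (hγ0 s')) (hPr'pos s').le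
  -- posterior of π' is injective
  have hinj : Function.Injective (posterior π' μ0) := by
    intro s₁ s₂ h
    by_contra hne
    refine hreg2 s₁ s₂ hne ⟨Pr' s₂ / Pr' s₁, fun θ => ?_⟩
    have h1 := congrFun h θ
    have h2 : π' s₁ θ * μ0 θ * Pr' s₂ = π' s₂ θ * μ0 θ * Pr' s₁ :=
      (div_eq_div_iff (hPr'pos s₁).ne' (hPr'pos s₂).ne').1 h1
    have h3 : π' s₂ θ * Pr' s₁ = Pr' s₂ * π' s₁ θ := by
      apply mul_left_cancel₀ (hμ0 θ).ne'
      calc μ0 θ * (π' s₂ θ * Pr' s₁) = π' s₂ θ * μ0 θ * Pr' s₁ := by ring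
        _ = π' s₁ θ * μ0 θ * Pr' s₂ := h2.symm
        _ = μ0 θ * (Pr' s₂ * π' s₁ θ) := by ring
    rw [div_mul_eq_mul_div, eq_div_iff (hPr'pos s₁).ne']
    exact h3
  -- key identities
  have hkey : ∀ s θ, π s θ * μ0 θ = Pr s * posterior π μ0 s θ := by
    intro s θ
    by_cases h : Pr s = 0
    · have : π s θ * μ0 θ = 0 := by
        have := (Finset.sum_eq_zero_iff_of_nonneg
          (fun θ _ => mul_nonneg (hπ0 s θ) (hμ0 θ).le)).1 h θ (Finset.mem_univ θ)
        exact this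
      simp [this, h]
    · simp only [posterior]
      rw [hPrdef] at h ⊢
      field_simp
  have hkey' : ∀ s' θ, π' s' θ * μ0 θ = Pr' s' * posterior π' μ0 s' θ := by
    intro s' θ
    have h := (hPr'pos s').ne'
    simp only [posterior]
    rw [hPr'def] at h ⊢
    field_simp
  -- Inner sum of w over s' is Pr s
  have hsumw : ∀ s, ∑ s', w s s' = Pr s := by
    intro s
    simp only [hwdef, hPr'def, Finset.mul_sum]
    rw [Finset.sum_comm]
    simp only [hPrdef]
    refine Finset.sum_congr rfl fun θ _ => ?_
    rw [hwg s θ, Finset.sum_mul]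
    exact Finset.sum_congr rfl fun s' _ => by ring
  -- the joint distribution
  refine ⟨∑ s : S, ∑ s' : S', Finsupp.single (posterior π μ0 s, posterior π' μ0 s') (w s s'),
    ?_, ?_, ?_, ?_, ?_, ?_⟩
  · -- nonnegativity
    intro p
    rw [Finsupp.finset_sum_apply]
    refine Finset.sum_nonneg fun s _ => ?_
    rw [Finsupp.finset_sum_apply]
    refine Finset.sum_nonneg fun s' _ => ?_
    rw [Finsupp.single_apply]
    split_ifs
    · exact hwnn s s'
    · exact le_refl 0
  · -- total mass 1
    rw [finsupp_sum_sum_single _ _ _ (fun _ => rfl) (fun _ _ _ => rfl)]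
    have : ∀ s : S, ∑ s', w s s' = Pr s := hsumw
    calc (∑ s : S, ∑ s', w s s') = ∑ s, Pr s := Finset.sum_congr rfl fun s _ => hsumw s
      _ = ∑ θ, (∑ s, π s θ) * μ0 θ := by
          simp only [hPrdef, Finset.sum_mul]; exact Finset.sum_comm
      _ = 1 := by simp only [hπ1, one_mul, hμ0sum]
  · -- barycenter property
    intro μ hμ θ
    have hnum : ((∑ s : S, ∑ s' : S', Finsupp.single
        (posterior π μ0 s, posterior π' μ0 s') (w s s')).sum
        fun p v => if p.1 = μ then v * p.2 θ else 0)
        = marg1 (∑ s : S, ∑ s' : S', Finsupp.single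
            (posterior π μ0 s, posterior π' μ0 s') (w s s')) μ * μ θ := by
      rw [finsupp_sum_sum_single _ _ _ (fun x => by simp) (fun x m₁ m₂ => by
        split_ifs <;> simp [add_mul])]
      rw [marg1, finsupp_sum_sum_single _ _ _ (fun x => by simp) (fun x m₁ m₂ => by
        split_ifs <;> simp)]
      rw [Finset.sum_mul]
      refine Finset.sum_congr rfl fun s _ => ?_
      rw [Finset.sum_mul]
      by_cases hs : posterior π μ0 s = μ
      · simp only [hs, eq_self_iff_true, if_true]
        have hl : ∑ s', w s s' * posterior π' μ0 s' θ = Pr s * μ θ := by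
          calc ∑ s', w s s' * posterior π' μ0 s' θ
              = ∑ s', φ s' s * γ s' * (π' s' θ * μ0 θ) := by
                refine Finset.sum_congr rfl fun s' _ => ?_
                rw [hkey' s' θ]; simp only [hwdef]; ring
            _ = (∑ s', φ s' s * γ s' * π' s' θ) * μ0 θ := by
                rw [Finset.sum_mul]; exact Finset.sum_congr rfl fun s' _ => by ring
            _ = π s θ * μ0 θ := by rw [← hwg s θ]
            _ = Pr s * μ θ := by rw [hkey s θ, hs]
        rw [hl, ← Finset.sum_mul, hsumw]
      · simp [hs]
    rw [hnum]
    exact mul_div_cancel_left₀ _ hμ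
  · -- first marginal
    intro μ
    rw [marg1, finsupp_sum_sum_single _ _ _ (fun x => by simp) (fun x m₁ m₂ => by
      split_ifs <;> simp)]
    rw [qdist]
    refine Finset.sum_congr rfl fun s _ => ?_
    by_cases hs : posterior π μ0 s = μ
    · simp only [hs, eq_self_iff_true, if_true]; exact hsumw s
    · simp [hs]
  · -- support of second marginal
    intro μ' hm
    rw [marg2, finsupp_sum_sum_single _ _ _ (fun x => by simp) (fun x m₁ m₂ => by
      split_ifs <;> simp)] at hm
    have : ∃ s', posterior π' μ0 s' = μ' := by
      by_contra hc
      push_neg at hc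
      exact hm (Finset.sum_eq_zero fun s _ => Finset.sum_eq_zero fun s' _ => by
        simp [hc s'])
    obtain ⟨s', hs'⟩ := this
    have hq : 0 < qdist π' μ0 μ' := by
      rw [qdist]
      refine Finset.sum_pos' (fun t _ => ?_) ⟨s', Finset.mem_univ s', ?_⟩
      · split_ifs
        · exact (hPr'pos t).le
        · exact le_refl 0
      · rw [if_pos hs']; exact hPr'pos s'
    exact hq.ne'
  · -- IsGreatest
    have hmarg2 : ∀ s' : S', marg2 (∑ s : S, ∑ s'' : S', Finsupp.single
        (posterior π μ0 s, posterior π' μ0 s'') (w s s'')) (posterior π' μ0 s')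
        = γ s' * Pr' s' := by
      intro s'
      rw [marg2, finsupp_sum_sum_single _ _ _ (fun x => by simp) (fun x m₁ m₂ => by
        split_ifs <;> simp)]
      rw [Finset.sum_comm]
      have : ∀ s'' : S', (∑ s : S, @ite ℝ (posterior π' μ0 s'' = posterior π' μ0 s')
          (Classical.propDecidable _) (w s s'') 0)
          = if s'' = s' then γ s'' * Pr' s'' else 0 := by
        intro s''
        by_cases h : s'' = s'
        · subst h
          simp only [eq_self_iff_true, if_true, hwdef]
          rw [← Finset.sum_mul, ← Finset.sum_mul, hφ1]
          ring
        · rw [if_neg h]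
          exact Finset.sum_eq_zero fun s _ => if_neg (fun hc => h (hinj hc))
      refine Eq.trans (Finset.sum_congr rfl fun y _ => this y) ?_
      simp
    have hqd : ∀ s' : S', qdist π' μ0 (posterior π' μ0 s') = Pr' s' := by
      intro s'
      rw [qdist]
      have : ∀ s'' : S', (if posterior π' μ0 s'' = posterior π' μ0 s'
          then ∑ θ, π' s'' θ * μ0 θ else 0) = if s'' = s' then Pr' s'' else 0 := by
        intro s''
        by_cases h : s'' = s'
        · subst h; simp [hPr'def]
        · rw [if_neg (fun hc => h (hinj hc)), if_neg h]
      rw [Finset.sum_congr rfl fun s'' _ => this s'']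
      simp
    have hset : {r : ℝ | ∃ μ' : Θ → ℝ, qdist π' μ0 μ' ≠ 0 ∧
        r = marg2 (∑ s : S, ∑ s' : S', Finsupp.single
          (posterior π μ0 s, posterior π' μ0 s') (w s s')) μ' / qdist π' μ0 μ'}
        = Set.range γ := by
      ext r
      constructor
      · rintro ⟨μ', hq, rfl⟩
        have : ∃ s', posterior π' μ0 s' = μ' := by
          by_contra hc
          push_neg at hc
          exact hq (by rw [qdist]; exact Finset.sum_eq_zero fun s' _ => by simp [hc s'])
        obtain ⟨s', rfl⟩ := this
        refine ⟨s', ?_⟩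
        rw [hmarg2 s', hqd s', mul_div_assoc, div_self (hPr'pos s').ne', mul_one]
      · rintro ⟨s', rfl⟩
        refine ⟨posterior π' μ0 s', by rw [hqd s']; exact (hPr'pos s').ne', ?_⟩
        rw [hmarg2 s', hqd s', mul_div_assoc, div_self (hPr'pos s').ne', mul_one]
    rw [hset]
    exact hβ
end

section
/- Let Π' = (S', π') be a regular experiment, Π = (S, π) an experiment, β ≥ 1, and μ0 ∈ Δ(Θ) a full-support prior. Suppose there exists a finitely supported joint probability distribution f on Δ(Θ) × Δ(Θ) such that: (1) for every μ in the support of the first marginal of f, ∑_{μ'} μ'·f(μ'|μ) = μ; (2) the first marginal of f equals q^Π_{μ0}; and (3) the second marginal of f is supported on supp(q^{Π'}_{μ0}) and satisfies f(μ') ≤ β·q^{Π'}_{μ0}(μ') for all μ'. Then the function γ(s') := f(μ'_{s'}) / q^{Π'}_{μ0}(μ'_{s'}) (where μ'_{s'} is the posterior of Π' given s') is a weight in Γ(Π'), and Π is a weighted garbling of Π' with weight γ, whose size is at most β. -/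
open scoped Classical

private lemma wg_aux (a q m P p t μ : ℝ) (hm : m ≠ 0) (hP : P ≠ 0) (hμ : μ ≠ 0)
    (h : p * μ = t * P) :
    a / (q * m) * (m / P) * p = a * t / (q * μ) := by
  rcases eq_or_ne q 0 with hq | hq
  · simp [hq]
  · field_simp
    linear_combination a * h


/-- "if" part of Theorem 1: if for a regular Π', an experiment Π, β ≥ 1,
and a full-support prior μ0 there is a finitely supported joint probability
distribution f on Δ(Θ) × Δ(Θ) whose conditionals have barycenter equal to the
conditioning belief, whose first marginal is q^Π_{μ0}, and whose second marginal is
supported on supp(q^{Π'}_{μ0}) with f(μ') ≤ β·q^{Π'}_{μ0}(μ'), then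
γ(s') = f(μ'_{s'})/q^{Π'}_{μ0}(μ'_{s'}) is a weight in Γ(Π') and Π is a weighted
garbling of Π' with weight γ of size at most β. -/
theorem joint_distribution_implies_weighted_garbling
    {Θ S S' : Type*} [Fintype Θ] [Nonempty Θ]
    [Fintype S] [Nonempty S] [Fintype S'] [Nonempty S']
    (π : S → Θ → ℝ) (π' : S' → Θ → ℝ)
    (hπ0 : ∀ s θ, 0 ≤ π s θ) (hπ1 : ∀ θ, ∑ s, π s θ = 1)
    (hπ'0 : ∀ s' θ, 0 ≤ π' s' θ) (hπ'1 : ∀ θ, ∑ s', π' s' θ = 1)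
    -- Π' is regular
    (hreg1 : ∀ s', ∃ θ, 0 < π' s' θ)
    (hreg2 : ∀ s₁' s₂' : S', s₁' ≠ s₂' → ¬ ∃ c : ℝ, ∀ θ, π' s₂' θ = c * π' s₁' θ)
    (β : ℝ) (hβ : 1 ≤ β)
    -- full-support prior μ0
    (μ0 : Θ → ℝ) (hμ0 : ∀ θ, 0 < μ0 θ) (hμ0sum : ∑ θ, μ0 θ = 1)
    -- the finitely supported joint probability distribution f
    (f : ((Θ → ℝ) × (Θ → ℝ)) →₀ ℝ)
    (hf0 : ∀ p, 0 ≤ f p) (hf1 : (f.sum fun _ v => v) = 1)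
    -- (1) for every μ in the support of the first marginal, ∑_{μ'} μ'·f(μ'|μ) = μ
    (hbary : ∀ μ : Θ → ℝ, marg1 f μ ≠ 0 → ∀ θ,
      (f.sum fun p v => if p.1 = μ then v * p.2 θ else 0) / marg1 f μ = μ θ)
    -- (2) the first marginal of f equals q^Π_{μ0}
    (hm1 : ∀ μ : Θ → ℝ, marg1 f μ = qdist π μ0 μ)
    -- (3) the second marginal is supported on supp(q^{Π'}_{μ0}) and f(μ') ≤ β·q^{Π'}_{μ0}(μ')
    (hsupp : ∀ μ' : Θ → ℝ, marg2 f μ' ≠ 0 → qdist π' μ0 μ' ≠ 0)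
    (hm2 : ∀ μ' : Θ → ℝ, marg2 f μ' ≤ β * qdist π' μ0 μ') :
    ∀ γ : S' → ℝ,
      (γ = fun s' => marg2 f (posterior π' μ0 s') / qdist π' μ0 (posterior π' μ0 s')) →
      -- γ is a weight in Γ(Π')
      (∀ s', 0 ≤ γ s') ∧
      (∀ θ, ∑ s', γ s' * π' s' θ = 1) ∧
      -- Π is a weighted garbling of Π' with weight γ
      (∃ φ : S' → S → ℝ, (∀ s' s, 0 ≤ φ s' s) ∧ (∀ s', ∑ s, φ s' s = 1) ∧
        ∀ s θ, π s θ = ∑ s', φ s' s * γ s' * π' s' θ) ∧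
      -- whose size is at most β
      (∀ s', γ s' ≤ β) := by
  classical
  intro γ hγ
  subst hγ
  have hμ0ne : ∀ θ, μ0 θ ≠ 0 := fun θ => (hμ0 θ).ne'
  -- positivity of total signal probabilities
  have hPr'pos : ∀ s', 0 < ∑ θ, π' s' θ * μ0 θ := by
    intro s'
    obtain ⟨θ, hθ⟩ := hreg1 s'
    exact Finset.sum_pos' (fun θ _ => mul_nonneg (hπ'0 s' θ) (hμ0 θ).le)
      ⟨θ, Finset.mem_univ θ, mul_pos hθ (hμ0 θ)⟩
  have hPrnn : ∀ s, 0 ≤ ∑ θ, π s θ * μ0 θ :=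
    fun s => Finset.sum_nonneg fun θ _ => mul_nonneg (hπ0 s θ) (hμ0 θ).le
  have hpostmul : ∀ s' θ, posterior π' μ0 s' θ * (∑ θ', π' s' θ' * μ0 θ') = π' s' θ * μ0 θ := by
    intro s' θ
    exact div_mul_cancel₀ _ (hPr'pos s').ne'
  have hpostmulS : ∀ s θ, (∑ θ', π s θ' * μ0 θ') ≠ 0 →
      posterior π μ0 s θ * (∑ θ', π s θ' * μ0 θ') = π s θ * μ0 θ := by
    intro s θ hs
    exact div_mul_cancel₀ _ hs
  -- distinct signals of Π' induce distinct posteriors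
  have hinj : Function.Injective (posterior π' μ0) := by
    intro s1 s2 h
    by_contra hne
    refine hreg2 s1 s2 hne ⟨(∑ θ, π' s2 θ * μ0 θ) / (∑ θ, π' s1 θ * μ0 θ), fun θ => ?_⟩
    have h1 := hpostmul s1 θ
    have h2 := hpostmul s2 θ
    have h3 : posterior π' μ0 s1 θ = posterior π' μ0 s2 θ := congrFun h θ
    rw [div_mul_eq_mul_div, eq_div_iff (hPr'pos s1).ne']
    exact mul_right_cancel₀ (hμ0ne θ)
      (by linear_combination (∑ θ', π' s2 θ' * μ0 θ') * h1 - (∑ θ', π' s1 θ' * μ0 θ') * h2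
            - (∑ θ', π' s1 θ' * μ0 θ') * (∑ θ', π' s2 θ' * μ0 θ') * h3)
  -- qdist at a posterior of Π' is its probability
  have hq'eq : ∀ s', qdist π' μ0 (posterior π' μ0 s') = ∑ θ, π' s' θ * μ0 θ := by
    intro s'
    unfold qdist
    rw [Finset.sum_eq_single_of_mem s' (Finset.mem_univ s')
      (fun b _ hb => if_neg fun h => hb (hinj h)), if_pos rfl]
  have hq'ex : ∀ μ' : Θ → ℝ, qdist π' μ0 μ' ≠ 0 → ∃ s', posterior π' μ0 s' = μ' := by
    intro μ' h
    by_contra hc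
    push_neg at hc
    exact h (Finset.sum_eq_zero fun s' _ => if_neg (hc s'))
  have hqex : ∀ μ : Θ → ℝ, qdist π μ0 μ ≠ 0 → ∃ s, posterior π μ0 s = μ := by
    intro μ h
    by_contra hc
    push_neg at hc
    exact h (Finset.sum_eq_zero fun s _ => if_neg (hc s))
  have hqnn : ∀ μ : Θ → ℝ, 0 ≤ qdist π μ0 μ := by
    intro μ
    refine Finset.sum_nonneg fun s _ => ?_
    split
    · exact hPrnn s
    · exact le_refl 0
  have hq'nn : ∀ μ' : Θ → ℝ, 0 ≤ qdist π' μ0 μ' := by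
    intro μ'
    refine Finset.sum_nonneg fun s' _ => ?_
    split
    · exact (hPr'pos s').le
    · exact le_refl 0
  have hmarg2nn : ∀ μ' : Θ → ℝ, 0 ≤ marg2 f μ' := by
    intro μ'
    refine Finset.sum_nonneg fun p _ => ?_
    have h : (0:ℝ) ≤ if p.2 = μ' then f p else 0 := by
      split
      · exact hf0 p
      · exact le_refl 0
    convert h using 2
    rfl
  have hfle2 : ∀ p, f p ≤ marg2 f p.2 := by
    intro p
    by_cases hp : f p = 0
    · rw [hp]; exact hmarg2nn _
    · have h1 : (if p.2 = p.2 then f p else 0) ≤ ∑ q ∈ f.support, if q.2 = p.2 then f q else 0 :=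
        Finset.single_le_sum (f := fun q => if q.2 = p.2 then f q else 0)
          (fun q _ => by split <;> [exact hf0 q; exact le_refl 0])
          (Finsupp.mem_support_iff.mpr hp)
      have h2 : (if p.2 = p.2 then f p else 0) = f p := if_pos rfl
      rw [marg2, Finsupp.sum, ← h2]
      convert h1 using 3
  have hfle1 : ∀ p, f p ≤ marg1 f p.1 := by
    intro p
    by_cases hp : f p = 0
    · rw [hp]
      refine Finset.sum_nonneg fun q _ => ?_
      have h : (0:ℝ) ≤ if q.1 = p.1 then f q else 0 := by
        split
        · exact hf0 q
        · exact le_refl 0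
      convert h using 2
      rfl
    · have h1 : (if p.1 = p.1 then f p else 0) ≤ ∑ q ∈ f.support, if q.1 = p.1 then f q else 0 :=
        Finset.single_le_sum (f := fun q => if q.1 = p.1 then f q else 0)
          (fun q _ => by split <;> [exact hf0 q; exact le_refl 0])
          (Finsupp.mem_support_iff.mpr hp)
      have h2 : (if p.1 = p.1 then f p else 0) = f p := if_pos rfl
      rw [marg1, Finsupp.sum, ← h2]
      convert h1 using 3
  have hqge : ∀ s, (∑ θ, π s θ * μ0 θ) ≤ qdist π μ0 (posterior π μ0 s) := by
    intro s
    have h1 : (if posterior π μ0 s = posterior π μ0 s then ∑ θ, π s θ * μ0 θ else 0)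
        ≤ ∑ s'', if posterior π μ0 s'' = posterior π μ0 s then ∑ θ, π s'' θ * μ0 θ else 0 :=
      Finset.single_le_sum
        (f := fun s'' => if posterior π μ0 s'' = posterior π μ0 s then ∑ θ, π s'' θ * μ0 θ else 0)
        (fun s'' _ => by split <;> [exact hPrnn s''; exact le_refl 0]) (Finset.mem_univ s)
    simpa [qdist] using h1
  have hPrzero : ∀ s θ, (∑ θ', π s θ' * μ0 θ') = 0 → π s θ * μ0 θ = 0 := by
    intro s θ hs
    have := (Finset.sum_eq_zero_iff_of_nonneg
      (fun θ' _ => mul_nonneg (hπ0 s θ') (hμ0 θ').le)).mp hs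
    exact this θ (Finset.mem_univ θ)
  -- rearranged barycenter condition
  have hbary2 : ∀ μ : Θ → ℝ, marg1 f μ ≠ 0 → ∀ θ,
      (f.sum fun p v => if p.1 = μ then v * p.2 θ else 0) = μ θ * qdist π μ0 μ := by
    intro μ hμ θ
    rw [← hm1, ← (div_eq_iff hμ).mp (hbary μ hμ θ)]
  -- the key barycenter identity: the mean of the second marginal is the prior
  have K1 : ∀ θ, (f.sum fun p v => v * p.2 θ) = μ0 θ := by
    intro θ
    rw [Finsupp.sum]
    rw [← Finset.sum_fiberwise_of_maps_to
      (fun p hp => Finset.mem_image_of_mem Prod.fst hp) (fun p => f p * p.2 θ)]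
    have step : ∀ μ ∈ f.support.image Prod.fst,
        (∑ p ∈ f.support.filter fun p => p.1 = μ, f p * p.2 θ) = μ θ * qdist π μ0 μ := by
      intro μ hμ
      obtain ⟨p, hp, hpe⟩ := Finset.mem_image.mp hμ
      have hfp : f p ≠ 0 := Finsupp.mem_support_iff.mp hp
      have hmarg : marg1 f μ ≠ 0 := by
        rw [← hpe]
        exact ne_of_gt (lt_of_lt_of_le ((hf0 p).lt_of_ne (Ne.symm hfp)) (hfle1 p))
      rw [Finset.sum_filter]
      exact hbary2 μ hmarg θ
    rw [Finset.sum_congr rfl step]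
    -- ∑ μ ∈ A, μ θ * qdist π μ0 μ = μ0 θ
    have expand : ∀ μ : Θ → ℝ, μ θ * qdist π μ0 μ
        = ∑ s, if posterior π μ0 s = μ then μ θ * (∑ θ', π s θ' * μ0 θ') else 0 := by
      intro μ
      unfold qdist
      rw [Finset.mul_sum]
      exact Finset.sum_congr rfl fun s _ => by split <;> simp
    rw [Finset.sum_congr rfl fun μ _ => expand μ, Finset.sum_comm]
    have inner : ∀ s, (∑ μ ∈ f.support.image Prod.fst,
        if posterior π μ0 s = μ then μ θ * (∑ θ', π s θ' * μ0 θ') else 0) = π s θ * μ0 θ := by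
      intro s
      rw [Finset.sum_ite_eq (f.support.image Prod.fst) (posterior π μ0 s)
        (fun μ => μ θ * (∑ θ', π s θ' * μ0 θ'))]
      by_cases hmem : posterior π μ0 s ∈ f.support.image Prod.fst
      · rw [if_pos hmem]
        by_cases hs : (∑ θ', π s θ' * μ0 θ') = 0
        · rw [hs, mul_zero, (hPrzero s θ hs)]
        · rw [hpostmulS s θ hs]
      · rw [if_neg hmem]
        have hmzero : marg1 f (posterior π μ0 s) = 0 := by
          refine Finset.sum_eq_zero fun p hp => ?_
          refine if_neg fun h => hmem ?_
          exact h ▸ Finset.mem_image_of_mem Prod.fst hp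
        have hqzero : qdist π μ0 (posterior π μ0 s) = 0 := by rw [← hm1]; exact hmzero
        have hPrz : (∑ θ', π s θ' * μ0 θ') = 0 :=
          le_antisymm (hqzero ▸ hqge s) (hPrnn s)
        exact (hPrzero s θ hPrz).symm
    rw [Finset.sum_congr rfl fun s _ => inner s, ← Finset.sum_mul, hπ1 θ, one_mul]
  -- size bound
  have hγle : ∀ s', marg2 f (posterior π' μ0 s') / qdist π' μ0 (posterior π' μ0 s') ≤ β := by
    intro s'
    rw [hq'eq s', div_le_iff₀ (hPr'pos s')]
    calc marg2 f (posterior π' μ0 s') ≤ β * qdist π' μ0 (posterior π' μ0 s') := hm2 _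
      _ = β * (∑ θ, π' s' θ * μ0 θ) := by rw [hq'eq s']
  -- the mean of marg2 over posteriors of Π'
  have W : ∀ θ, (∑ s', marg2 f (posterior π' μ0 s') * posterior π' μ0 s' θ)
      = f.sum fun p v => v * p.2 θ := by
    intro θ
    have hterm : ∀ s', marg2 f (posterior π' μ0 s') * posterior π' μ0 s' θ
        = ∑ p ∈ f.support, if p.2 = posterior π' μ0 s' then f p * p.2 θ else 0 := by
      intro s'
      rw [marg2, Finsupp.sum, Finset.sum_mul]
      refine Finset.sum_congr rfl fun p _ => ?_
      have h2 : (if p.2 = posterior π' μ0 s' then f p else 0) * posterior π' μ0 s' θ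
          = if p.2 = posterior π' μ0 s' then f p * p.2 θ else 0 := by
        by_cases h : p.2 = posterior π' μ0 s'
        · rw [if_pos h, if_pos h, h]
        · rw [if_neg h, if_neg h, zero_mul]
      convert h2 using 2
      congr
    rw [Finset.sum_congr rfl fun s' _ => hterm s', Finset.sum_comm, Finsupp.sum]
    refine Finset.sum_congr rfl fun p hp => ?_
    have hfp : f p ≠ 0 := Finsupp.mem_support_iff.mp hp
    have hm2p : marg2 f p.2 ≠ 0 :=
      ne_of_gt (lt_of_lt_of_le ((hf0 p).lt_of_ne (Ne.symm hfp)) (hfle2 p))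
    obtain ⟨s0, hs0⟩ := hq'ex p.2 (hsupp p.2 hm2p)
    rw [Finset.sum_eq_single_of_mem s0 (Finset.mem_univ s0)
      (fun b _ hb => if_neg fun h => hb (hinj (hs0.trans h)).symm), if_pos hs0.symm]
  -- γ is a weight
  have hwsum : ∀ θ, (∑ s', marg2 f (posterior π' μ0 s') / qdist π' μ0 (posterior π' μ0 s')
      * π' s' θ) = 1 := by
    intro θ
    have hterm : ∀ s', marg2 f (posterior π' μ0 s') / qdist π' μ0 (posterior π' μ0 s') * π' s' θ
        = marg2 f (posterior π' μ0 s') * posterior π' μ0 s' θ / μ0 θ := by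
      intro s'
      rw [hq'eq s', div_mul_eq_mul_div, div_eq_div_iff (hPr'pos s').ne' (hμ0ne θ)]
      linear_combination marg2 f (posterior π' μ0 s') * (hpostmul s' θ).symm
    rw [Finset.sum_congr rfl fun s' _ => hterm s', ← Finset.sum_div, W θ, K1 θ,
      div_self (hμ0ne θ)]
  -- conditional mean identity used for the garbling equation
  have D : ∀ (μ : Θ → ℝ) (θ : Θ),
      (∑ s', f (μ, posterior π' μ0 s') * posterior π' μ0 s' θ)
        = f.sum fun p v => if p.1 = μ then v * p.2 θ else 0 := by
    intro μ θ
    have hi : Function.Injective (fun s' : S' => ((μ, posterior π' μ0 s') : (Θ → ℝ) × (Θ → ℝ))) :=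
      fun a b h => hinj (congrArg Prod.snd h)
    have hR : (f.sum fun p v => if p.1 = μ then v * p.2 θ else 0)
        = ∑ p ∈ f.support.filter fun p => p.1 = μ, f p * p.2 θ := by
      rw [Finsupp.sum, Finset.sum_filter]
    have himg : (∑ s', f (μ, posterior π' μ0 s') * posterior π' μ0 s' θ)
        = ∑ p ∈ Finset.univ.image (fun s' : S' => ((μ, posterior π' μ0 s') : (Θ → ℝ) × (Θ → ℝ))),
            f p * p.2 θ := by
      rw [Finset.sum_image (fun a _ b _ h => hi h)]
    rw [hR, himg]
    refine (Finset.sum_subset ?_ ?_).symm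
    · intro p hp
      obtain ⟨hps, hp1⟩ := Finset.mem_filter.mp hp
      have hfp : f p ≠ 0 := Finsupp.mem_support_iff.mp hps
      have hm2p : marg2 f p.2 ≠ 0 :=
        ne_of_gt (lt_of_lt_of_le ((hf0 p).lt_of_ne (Ne.symm hfp)) (hfle2 p))
      obtain ⟨s0, hs0⟩ := hq'ex p.2 (hsupp p.2 hm2p)
      exact Finset.mem_image.mpr ⟨s0, Finset.mem_univ s0, Prod.ext hp1.symm hs0⟩
    · intro p hpim hpf
      obtain ⟨s0, _, hs0⟩ := Finset.mem_image.mp hpim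
      have hp1 : p.1 = μ := by rw [← hs0]
      have hz : f p = 0 := by
        by_contra hc
        exact hpf (Finset.mem_filter.mpr ⟨Finsupp.mem_support_iff.mpr hc, hp1⟩)
      rw [hz, zero_mul]
  -- row sums of the candidate garbling
  have C : ∀ μ' : Θ → ℝ,
      (∑ s, f (posterior π μ0 s, μ') * (∑ θ, π s θ * μ0 θ) / qdist π μ0 (posterior π μ0 s))
        = marg2 f μ' := by
    intro μ'
    rw [← Finset.sum_fiberwise_of_maps_to
      (fun s _ => Finset.mem_image_of_mem (posterior π μ0) (Finset.mem_univ s))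
      (fun s => f (posterior π μ0 s, μ') * (∑ θ, π s θ * μ0 θ) / qdist π μ0 (posterior π μ0 s))]
    have inner : ∀ μ ∈ Finset.univ.image (posterior π μ0),
        (∑ s ∈ Finset.univ.filter fun s => posterior π μ0 s = μ,
          f (posterior π μ0 s, μ') * (∑ θ, π s θ * μ0 θ) / qdist π μ0 (posterior π μ0 s))
          = f (μ, μ') := by
      intro μ hμ
      have hterm : ∀ s ∈ Finset.univ.filter fun s => posterior π μ0 s = μ,
          f (posterior π μ0 s, μ') * (∑ θ, π s θ * μ0 θ) / qdist π μ0 (posterior π μ0 s)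
            = f (μ, μ') / qdist π μ0 μ * (∑ θ, π s θ * μ0 θ) := by
        intro s hs
        rw [(Finset.mem_filter.mp hs).2]
        ring
      rw [Finset.sum_congr rfl hterm, ← Finset.mul_sum]
      have hsum : (∑ s ∈ Finset.univ.filter fun s => posterior π μ0 s = μ, ∑ θ, π s θ * μ0 θ)
          = qdist π μ0 μ := by
        rw [Finset.sum_filter]
        rfl
      rw [hsum]
      by_cases hq : qdist π μ0 μ = 0
      · have hfz : f (μ, μ') = 0 := by
          refine le_antisymm ?_ (hf0 _)
          have h1 := hfle1 (μ, μ')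
          rw [hm1] at h1
          exact le_trans h1 (le_of_eq hq)
        rw [hfz, hq]
        simp
      · rw [div_mul_cancel₀ _ hq]
    rw [Finset.sum_congr rfl inner]
    have hi : Function.Injective (fun μ : Θ → ℝ => ((μ, μ') : (Θ → ℝ) × (Θ → ℝ))) :=
      fun a b h => congrArg Prod.fst h
    have himg : (∑ μ ∈ Finset.univ.image (posterior π μ0), f (μ, μ'))
        = ∑ p ∈ (Finset.univ.image (posterior π μ0)).image
            (fun μ : Θ → ℝ => ((μ, μ') : (Θ → ℝ) × (Θ → ℝ))), f p :=
      (Finset.sum_image (fun a _ b _ h => hi h)).symm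
    have hR : marg2 f μ' = ∑ p ∈ f.support.filter fun p => p.2 = μ', f p := by
      rw [marg2, Finsupp.sum, Finset.sum_filter]
      exact Finset.sum_congr rfl fun p _ => by congr
    rw [himg, hR]
    refine (Finset.sum_subset ?_ ?_).symm
    · intro p hp
      obtain ⟨hps, hp2⟩ := Finset.mem_filter.mp hp
      have hfp : f p ≠ 0 := Finsupp.mem_support_iff.mp hps
      have hmg : marg1 f p.1 ≠ 0 :=
        ne_of_gt (lt_of_lt_of_le ((hf0 p).lt_of_ne (Ne.symm hfp)) (hfle1 p))
      have hqz : qdist π μ0 p.1 ≠ 0 := by rw [← hm1]; exact hmg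
      obtain ⟨s1, hs1⟩ := hqex p.1 hqz
      refine Finset.mem_image.mpr ⟨p.1, ?_, Prod.ext rfl hp2.symm⟩
      exact Finset.mem_image.mpr ⟨s1, Finset.mem_univ s1, hs1⟩
    · intro p hpim hpf
      obtain ⟨μ, _, hμp⟩ := Finset.mem_image.mp hpim
      have hp2 : p.2 = μ' := by rw [← hμp]
      by_contra hc
      exact hpf (Finset.mem_filter.mpr ⟨Finsupp.mem_support_iff.mpr
        (fun h => hc (by rw [h])), hp2⟩)
  -- assemble
  refine ⟨fun s' => div_nonneg (hmarg2nn _) (hq'nn _), hwsum, ?_, hγle⟩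
  refine ⟨fun s' s => if marg2 f (posterior π' μ0 s') = 0
      then (if s = Classical.arbitrary S then 1 else 0)
      else f (posterior π μ0 s, posterior π' μ0 s') * (∑ θ, π s θ * μ0 θ)
        / (qdist π μ0 (posterior π μ0 s) * marg2 f (posterior π' μ0 s')), ?_, ?_, ?_⟩
  · intro s' s
    dsimp only
    split
    · split
      · exact zero_le_one
      · exact le_refl 0
    · exact div_nonneg (mul_nonneg (hf0 _) (hPrnn s))
        (mul_nonneg (hqnn _) (hmarg2nn _))
  · intro s'
    by_cases h0 : marg2 f (posterior π' μ0 s') = 0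
    · simp only [if_pos h0]
      simp
    · simp only [if_neg h0]
      have hterm : ∀ s : S, f (posterior π μ0 s, posterior π' μ0 s') * (∑ θ, π s θ * μ0 θ)
          / (qdist π μ0 (posterior π μ0 s) * marg2 f (posterior π' μ0 s'))
          = (f (posterior π μ0 s, posterior π' μ0 s') * (∑ θ, π s θ * μ0 θ)
            / qdist π μ0 (posterior π μ0 s)) / marg2 f (posterior π' μ0 s') := by
        intro s
        rw [div_div]
      rw [Finset.sum_congr rfl fun s _ => hterm s, ← Finset.sum_div, C (posterior π' μ0 s'),
        div_self h0]
  · intro s θ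
    have hterm : ∀ s', (if marg2 f (posterior π' μ0 s') = 0
          then (if s = Classical.arbitrary S then 1 else 0)
          else f (posterior π μ0 s, posterior π' μ0 s') * (∑ θ', π s θ' * μ0 θ')
            / (qdist π μ0 (posterior π μ0 s) * marg2 f (posterior π' μ0 s')))
        * (marg2 f (posterior π' μ0 s') / qdist π' μ0 (posterior π' μ0 s')) * π' s' θ
        = f (posterior π μ0 s, posterior π' μ0 s') * (∑ θ', π s θ' * μ0 θ')
            * posterior π' μ0 s' θ / (qdist π μ0 (posterior π μ0 s) * μ0 θ) := by
      intro s'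
      by_cases h0 : marg2 f (posterior π' μ0 s') = 0
      · rw [if_pos h0, h0]
        have hfz : f (posterior π μ0 s, posterior π' μ0 s') = 0 :=
          le_antisymm (le_trans (hfle2 _) (le_of_eq h0)) (hf0 _)
        rw [hfz]
        simp
      · rw [if_neg h0, hq'eq s']
        exact wg_aux _ _ _ _ _ _ _ h0 (hPr'pos s').ne' (hμ0ne θ) (hpostmul s' θ).symm
    rw [Finset.sum_congr rfl fun s' _ => hterm s']
    by_cases hPs : (∑ θ', π s θ' * μ0 θ') = 0
    · rw [Finset.sum_eq_zero fun s' _ => by rw [hPs]; ring]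
      exact (mul_eq_zero.mp (hPrzero s θ hPs)).resolve_right (hμ0ne θ)
    · have hqpos : qdist π μ0 (posterior π μ0 s) ≠ 0 :=
        ne_of_gt (lt_of_lt_of_le (lt_of_le_of_ne (hPrnn s) (Ne.symm hPs)) (hqge s))
      have hmarg : marg1 f (posterior π μ0 s) ≠ 0 := by rw [hm1]; exact hqpos
      have hsum2 : (∑ s', f (posterior π μ0 s, posterior π' μ0 s') * (∑ θ', π s θ' * μ0 θ')
          * posterior π' μ0 s' θ / (qdist π μ0 (posterior π μ0 s) * μ0 θ))
          = (∑ s', f (posterior π μ0 s, posterior π' μ0 s') * posterior π' μ0 s' θ)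
            * (∑ θ', π s θ' * μ0 θ') / (qdist π μ0 (posterior π μ0 s) * μ0 θ) := by
        rw [Finset.sum_mul, Finset.sum_div]
        exact Finset.sum_congr rfl fun s' _ => by ring
      rw [hsum2, D (posterior π μ0 s) θ, hbary2 _ hmarg θ,
        eq_div_iff (mul_ne_zero hqpos (hμ0ne θ))]
      linear_combination (-(qdist π μ0 (posterior π μ0 s))) * (hpostmulS s θ hPs)
end

section
/- Let Π' = (S', π') be a regular experiment, μ0 ∈ Δ(Θ) a full-support prior, and f a finitely supported joint probability distribution on Δ(Θ) × Δ(Θ) such that: (1) for every μ in the support of the first marginal, ∑_{μ'} μ'·f(μ'|μ) = μ; (2) the first marginal of f equals q^Π_{μ0} for some experiment Π = (S, π); and the second marginal of f is supported on supp(q^{Π'}_{μ0}). Then the function γ: S' → [0,∞) defined by γ(s') = f(μ'_{s'}) / q^{Π'}_{μ0}(μ'_{s'}) (with μ'_{s'} the posterior of Π' given s') satisfies ∑_{s'∈S'} γ(s') π'(s'|θ) = 1 for every θ ∈ Θ, i.e., γ ∈ Γ(Π'). -/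
open scoped Classical

/-- for a regular Π', a full-support prior μ0, and a finitely supported
joint probability distribution f on Δ(Θ) × Δ(Θ) whose conditionals have barycenter
equal to the conditioning belief, whose first marginal is q^Π_{μ0} for some experiment
Π, and whose second marginal is supported on supp(q^{Π'}_{μ0}), the function
γ(s') = f(μ'_{s'})/q^{Π'}_{μ0}(μ'_{s'}) satisfies ∑_{s'} γ(s')π'(s'|θ) = 1 for every
θ, i.e., γ ∈ Γ(Π'). -/
theorem gamma_is_weight
    {Θ S S' : Type*} [Fintype Θ] [Nonempty Θ]
    [Fintype S] [Nonempty S] [Fintype S'] [Nonempty S']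
    (π : S → Θ → ℝ) (π' : S' → Θ → ℝ)
    (hπ0 : ∀ s θ, 0 ≤ π s θ) (hπ1 : ∀ θ, ∑ s, π s θ = 1)
    (hπ'0 : ∀ s' θ, 0 ≤ π' s' θ) (hπ'1 : ∀ θ, ∑ s', π' s' θ = 1)
    -- Π' is regular
    (hreg1 : ∀ s', ∃ θ, 0 < π' s' θ)
    (hreg2 : ∀ s₁' s₂' : S', s₁' ≠ s₂' → ¬ ∃ c : ℝ, ∀ θ, π' s₂' θ = c * π' s₁' θ)
    -- full-support prior μ0
    (μ0 : Θ → ℝ) (hμ0 : ∀ θ, 0 < μ0 θ) (hμ0sum : ∑ θ, μ0 θ = 1)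
    -- the finitely supported joint probability distribution f
    (f : ((Θ → ℝ) × (Θ → ℝ)) →₀ ℝ)
    (hf0 : ∀ p, 0 ≤ f p) (hf1 : (f.sum fun _ v => v) = 1)
    -- (1) for every μ in the support of the first marginal, ∑_{μ'} μ'·f(μ'|μ) = μ
    (hbary : ∀ μ : Θ → ℝ, marg1 f μ ≠ 0 → ∀ θ,
      (f.sum fun p v => if p.1 = μ then v * p.2 θ else 0) / marg1 f μ = μ θ)
    -- (2) the first marginal of f equals q^Π_{μ0}
    (hm1 : ∀ μ : Θ → ℝ, marg1 f μ = qdist π μ0 μ)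
    -- the second marginal is supported on supp(q^{Π'}_{μ0})
    (hsupp : ∀ μ' : Θ → ℝ, marg2 f μ' ≠ 0 → qdist π' μ0 μ' ≠ 0) :
    ∀ γ : S' → ℝ,
      (γ = fun s' => marg2 f (posterior π' μ0 s') / qdist π' μ0 (posterior π' μ0 s')) →
      (∀ s', 0 ≤ γ s') ∧ (∀ θ, ∑ s', γ s' * π' s' θ = 1) := by
  intro γ hγ
  subst hγ
  -- positivity of Pr'(s')
  have hP'pos : ∀ s', 0 < ∑ θ, π' s' θ * μ0 θ := by
    intro s'
    obtain ⟨θ0, hθ0⟩ := hreg1 s'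
    exact Finset.sum_pos' (fun θ _ => mul_nonneg (hπ'0 s' θ) (hμ0 θ).le)
      ⟨θ0, Finset.mem_univ _, mul_pos hθ0 (hμ0 θ0)⟩
  have hpost' : ∀ (s' : S') (θ : Θ),
      posterior π' μ0 s' θ = π' s' θ * μ0 θ / ∑ θ', π' s' θ' * μ0 θ' := fun _ _ => rfl
  -- injectivity of the posterior map for Π'
  have hinj : ∀ s₁ s₂ : S', posterior π' μ0 s₁ = posterior π' μ0 s₂ → s₁ = s₂ := by
    intro s₁ s₂ h
    by_contra hne
    refine hreg2 s₁ s₂ hne ⟨(∑ θ, π' s₂ θ * μ0 θ) / (∑ θ, π' s₁ θ * μ0 θ), fun θ => ?_⟩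
    have h1 := congrFun h θ
    rw [hpost', hpost', div_eq_div_iff (hP'pos s₁).ne' (hP'pos s₂).ne'] at h1
    have h2 : μ0 θ * (π' s₁ θ * ∑ θ', π' s₂ θ' * μ0 θ')
        = μ0 θ * (π' s₂ θ * ∑ θ', π' s₁ θ' * μ0 θ') := by linear_combination h1
    have h3 := mul_left_cancel₀ (hμ0 θ).ne' h2
    have hne1 := (hP'pos s₁).ne'
    field_simp
    linarith
  -- qdist at a Π'-posterior is exactly Pr'(s')
  have hq' : ∀ s', qdist π' μ0 (posterior π' μ0 s') = ∑ θ, π' s' θ * μ0 θ := by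
    intro s'
    unfold qdist
    rw [Finset.sum_eq_single s' (fun b _ hb => if_neg (fun h => hb (hinj b s' h)))
      (fun h => absurd (Finset.mem_univ s') h), if_pos rfl]
  have hfpos : ∀ p ∈ f.support, 0 < f p := fun p hp =>
    lt_of_le_of_ne (hf0 p) (Ne.symm (Finsupp.mem_support_iff.mp hp))
  have hm2pos : ∀ p ∈ f.support, 0 < marg2 f p.2 := by
    intro p hp
    unfold marg2 Finsupp.sum
    refine Finset.sum_pos' (fun q _ => ?_) ⟨p, hp, by simpa using hfpos p hp⟩
    dsimp only
    split_ifs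
    · exact hf0 q
    · exact le_refl 0
  -- every second coordinate in the support is a posterior of Π'
  have hex : ∀ p ∈ f.support, ∃ s', posterior π' μ0 s' = p.2 := by
    intro p hp
    have hq := hsupp p.2 (hm2pos p hp).ne'
    unfold qdist at hq
    obtain ⟨s, _, hs⟩ := Finset.exists_ne_zero_of_sum_ne_zero hq
    by_cases h : posterior π' μ0 s = p.2
    · exact ⟨s, h⟩
    · rw [if_neg h] at hs; exact absurd rfl hs
  have hm1pos : ∀ μ : Θ → ℝ, (∃ p ∈ f.support, p.1 = μ) → 0 < marg1 f μ := by
    rintro μ ⟨p, hp, hpeq⟩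
    unfold marg1 Finsupp.sum
    refine Finset.sum_pos' (fun q _ => ?_) ⟨p, hp, by simpa [hpeq] using hfpos p hp⟩
    dsimp only
    split_ifs
    · exact hf0 q
    · exact le_refl 0
  have hTexists : ∀ μ : Θ → ℝ, marg1 f μ ≠ 0 → ∃ p ∈ f.support, p.1 = μ := by
    intro μ hμ
    unfold marg1 Finsupp.sum at hμ
    obtain ⟨p, hp, hpne⟩ := Finset.exists_ne_zero_of_sum_ne_zero hμ
    dsimp only at hpne
    by_cases h : p.1 = μ
    · exact ⟨p, hp, h⟩
    · rw [if_neg h] at hpne; exact absurd rfl hpne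
  have hqnn : ∀ μ' : Θ → ℝ, 0 ≤ qdist π' μ0 μ' := by
    intro μ'
    unfold qdist
    refine Finset.sum_nonneg fun s _ => ?_
    split_ifs
    · exact Finset.sum_nonneg fun θ _ => mul_nonneg (hπ'0 s θ) (hμ0 θ).le
    · exact le_refl 0
  have hm2nn : ∀ μ' : Θ → ℝ, 0 ≤ marg2 f μ' := by
    intro μ'
    unfold marg2 Finsupp.sum
    refine Finset.sum_nonneg fun p _ => ?_
    dsimp only
    split_ifs
    · exact hf0 p
    · exact le_refl 0
  refine ⟨fun s' => div_nonneg (hm2nn _) (hqnn _), fun θ => ?_⟩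
  -- Step B : group by posteriors of Π'
  have stepB : ∑ s', marg2 f (posterior π' μ0 s') * posterior π' μ0 s' θ
      = f.sum fun p v => v * p.2 θ := by
    simp only [marg2, Finsupp.sum, Finset.sum_mul, ite_mul, zero_mul]
    rw [Finset.sum_comm]
    refine Finset.sum_congr rfl fun p hp => ?_
    obtain ⟨s₀, hs₀⟩ := hex p hp
    rw [Finset.sum_eq_single s₀
      (fun b _ hb => if_neg (fun h => hb (hinj b s₀ (h.symm.trans hs₀.symm))))
      (fun h => absurd (Finset.mem_univ s₀) h), if_pos hs₀.symm, hs₀]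
  -- Step C : group by first coordinates, use barycenter and hm1
  have stepC : (f.sum fun p v => v * p.2 θ)
      = ∑ μ ∈ f.support.image Prod.fst, qdist π μ0 μ * μ θ := by
    rw [Finsupp.sum,
      ← Finset.sum_fiberwise_of_maps_to (fun p hp => Finset.mem_image_of_mem Prod.fst hp)
        (fun p => f p * p.2 θ)]
    refine Finset.sum_congr rfl fun μ hμ => ?_
    obtain ⟨p₀, hp₀, hp₀1⟩ := Finset.mem_image.mp hμ
    have hmarg1 : 0 < marg1 f μ := hm1pos μ ⟨p₀, hp₀, hp₀1⟩
    have hb := hbary μ hmarg1.ne' θ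
    rw [div_eq_iff hmarg1.ne'] at hb
    have hfib : (∑ p ∈ f.support.filter (fun p => p.1 = μ), f p * p.2 θ)
        = f.sum fun p v => if p.1 = μ then v * p.2 θ else 0 := by
      rw [Finsupp.sum, Finset.sum_filter]
    rw [hfib, hb, hm1]
    ring
  -- Step D : martingale property of q^Π
  have stepD : ∑ μ ∈ f.support.image Prod.fst, qdist π μ0 μ * μ θ = μ0 θ := by
    have hterm : ∀ s : S, (∑ μ ∈ f.support.image Prod.fst,
        if posterior π μ0 s = μ then (∑ θ', π s θ' * μ0 θ') * μ θ else 0)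
        = π s θ * μ0 θ := by
      intro s
      rw [Finset.sum_ite_eq]
      by_cases hPr : (∑ θ', π s θ' * μ0 θ') = 0
      · have hzero : π s θ * μ0 θ = 0 :=
          (Finset.sum_eq_zero_iff_of_nonneg
            (fun θ' _ => mul_nonneg (hπ0 s θ') (hμ0 θ').le)).mp hPr θ (Finset.mem_univ θ)
        rw [hzero]
        split_ifs with h
        · rw [hPr, zero_mul]
        · rfl
      · have hPrpos : 0 < ∑ θ', π s θ' * μ0 θ' :=
          lt_of_le_of_ne
            (Finset.sum_nonneg fun θ' _ => mul_nonneg (hπ0 s θ') (hμ0 θ').le) (Ne.symm hPr)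
        have hqs : qdist π μ0 (posterior π μ0 s) ≠ 0 := by
          unfold qdist
          refine ne_of_gt (Finset.sum_pos' (fun s'' _ => ?_)
            ⟨s, Finset.mem_univ s, by rw [if_pos rfl]; exact hPrpos⟩)
          split_ifs
          · exact Finset.sum_nonneg fun θ' _ => mul_nonneg (hπ0 s'' θ') (hμ0 θ').le
          · exact le_refl 0
        have h1 : marg1 f (posterior π μ0 s) ≠ 0 := by rw [hm1]; exact hqs
        obtain ⟨p, hp, hpeq⟩ := hTexists (posterior π μ0 s) h1
        rw [if_pos (Finset.mem_image.mpr ⟨p, hp, hpeq⟩)]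
        unfold posterior
        field_simp
    have expand : ∀ μ : Θ → ℝ, qdist π μ0 μ * μ θ
        = ∑ s, if posterior π μ0 s = μ then (∑ θ', π s θ' * μ0 θ') * μ θ else 0 := by
      intro μ
      unfold qdist
      rw [Finset.sum_mul]
      refine Finset.sum_congr rfl fun s _ => ?_
      split_ifs
      · rfl
      · rw [zero_mul]
    rw [Finset.sum_congr rfl fun μ _ => expand μ, Finset.sum_comm,
      Finset.sum_congr rfl fun s _ => hterm s, ← Finset.sum_mul, hπ1, one_mul]
  -- assemble
  have key1 : ∀ s', marg2 f (posterior π' μ0 s') / qdist π' μ0 (posterior π' μ0 s') * π' s' θ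
      = marg2 f (posterior π' μ0 s') * posterior π' μ0 s' θ / μ0 θ := by
    intro s'
    rw [hq' s', hpost' s' θ]
    have h1 := (hP'pos s').ne'
    have h2 := (hμ0 θ).ne'
    field_simp
  calc ∑ s', marg2 f (posterior π' μ0 s') / qdist π' μ0 (posterior π' μ0 s') * π' s' θ
      = ∑ s', marg2 f (posterior π' μ0 s') * posterior π' μ0 s' θ / μ0 θ :=
        Finset.sum_congr rfl fun s' _ => key1 s'
    _ = (∑ s', marg2 f (posterior π' μ0 s') * posterior π' μ0 s' θ) / μ0 θ := by
        rw [Finset.sum_div]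
    _ = (f.sum fun p v => v * p.2 θ) / μ0 θ := by rw [stepB]
    _ = μ0 θ / μ0 θ := by rw [stepC, stepD]
    _ = 1 := div_self (hμ0 θ).ne'
end

section
/- If the experiment Π = (S, π) is a weighted garbling of the experiment Π' = (S', π') (for some weight γ ∈ Γ(Π')), then for every full-support prior μ0 ∈ Δ(Θ) and every signal s ∈ S with positive probability under (Π, μ0), the posterior μ^Π_s lies in the convex hull of { μ^{Π'}_{s'} : s' ∈ S' has positive probability under (Π', μ0) }. -/
/-- if Π is a weighted garbling of Π', then for every full-support prior
μ0 and every signal s of Π with positive probability, the posterior μ^Π_s lies in the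
convex hull of the posteriors of Π' at signals with positive probability. -/
theorem weighted_garbling_posteriors_in_convex_hull
    {Θ S S' : Type*} [Fintype Θ] [Nonempty Θ]
    [Fintype S] [Nonempty S] [Fintype S'] [Nonempty S']
    (π : S → Θ → ℝ) (π' : S' → Θ → ℝ)
    (hπ0 : ∀ s θ, 0 ≤ π s θ) (hπ1 : ∀ θ, ∑ s, π s θ = 1)
    (hπ'0 : ∀ s' θ, 0 ≤ π' s' θ) (hπ'1 : ∀ θ, ∑ s', π' s' θ = 1)
    -- Π is a weighted garbling of Π' with some weight γ
    (γ : S' → ℝ) (hγ0 : ∀ s', 0 ≤ γ s') (hγ1 : ∀ θ, ∑ s', γ s' * π' s' θ = 1)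
    (φ : S' → S → ℝ) (hφ0 : ∀ s' s, 0 ≤ φ s' s) (hφ1 : ∀ s', ∑ s, φ s' s = 1)
    (hwg : ∀ s θ, π s θ = ∑ s', φ s' s * γ s' * π' s' θ) :
    ∀ μ0 : Θ → ℝ, (∀ θ, 0 < μ0 θ) → (∑ θ, μ0 θ = 1) →
      ∀ s : S, 0 < ∑ θ, π s θ * μ0 θ →
        posterior π μ0 s ∈ convexHull ℝ
          {μ : Θ → ℝ | ∃ s' : S', 0 < (∑ θ, π' s' θ * μ0 θ) ∧ μ = posterior π' μ0 s'} := by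
  intro μ0 hμ0 hμ0sum s hP
  set P : ℝ := ∑ θ, π s θ * μ0 θ with hPdef
  set Pr : S' → ℝ := fun s' => ∑ θ, π' s' θ * μ0 θ with hPrdef
  have hPr0 : ∀ s', 0 ≤ Pr s' := fun s' =>
    Finset.sum_nonneg fun θ _ => mul_nonneg (hπ'0 s' θ) (hμ0 θ).le
  set w : S' → ℝ := fun s' => φ s' s * γ s' * Pr s' / P with hwdef
  have hw0 : ∀ s', 0 ≤ w s' := fun s' =>
    div_nonneg (mul_nonneg (mul_nonneg (hφ0 s' s) (hγ0 s')) (hPr0 s')) hP.le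
  set z : S' → Θ → ℝ := posterior π' μ0 with hzdef
  -- sum of weights is 1
  have hwsum : ∑ s', w s' = 1 := by
    have h1 : ∑ s', φ s' s * γ s' * Pr s' = P := by
      rw [hPdef]
      simp only [hPrdef, Finset.mul_sum]
      rw [Finset.sum_comm]
      refine Finset.sum_congr rfl fun θ _ => ?_
      rw [hwg s θ, Finset.sum_mul]
      exact Finset.sum_congr rfl fun s' _ => by ring
    simp only [hwdef, ← Finset.sum_div, h1, div_self hP.ne']
  -- posterior is the weighted combination
  have hcomb : posterior π μ0 s = ∑ s', w s' • z s' := by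
    funext θ
    have : (∑ s', w s' • z s') θ = ∑ s', w s' * z s' θ := by
      simp [Finset.sum_apply]
    rw [this]
    show π s θ * μ0 θ / P = _
    rw [hwg s θ, Finset.sum_mul, Finset.sum_div]
    refine Finset.sum_congr rfl fun s' _ => ?_
    show φ s' s * γ s' * π' s' θ * μ0 θ / P = w s' * z s' θ
    by_cases h : Pr s' = 0
    · have hterm : π' s' θ * μ0 θ = 0 := by
        have := (Finset.sum_eq_zero_iff_of_nonneg
          (fun θ' _ => mul_nonneg (hπ'0 s' θ') (hμ0 θ').le)).mp h θ (Finset.mem_univ θ)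
        exact this
      have hπ'z : π' s' θ = 0 := by
        rcases mul_eq_zero.mp hterm with h' | h'
        · exact h'
        · exact absurd h' (hμ0 θ).ne'
      simp [hwdef, h, hπ'z]
    · show φ s' s * γ s' * π' s' θ * μ0 θ / P =
        (φ s' s * γ s' * Pr s' / P) * (π' s' θ * μ0 θ / Pr s')
      field_simp
  -- convex hull membership via center of mass over positive-weight signals
  set t : Finset S' := Finset.univ.filter (fun s' => w s' ≠ 0) with htdef
  have htsum : ∑ s' ∈ t, w s' = 1 := by
    rw [htdef, Finset.sum_filter_ne_zero]
    exact hwsum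
  have hz : ∀ s' ∈ t, z s' ∈
      {μ : Θ → ℝ | ∃ s' : S', 0 < (∑ θ, π' s' θ * μ0 θ) ∧ μ = posterior π' μ0 s'} := by
    intro s' hs'
    have hwne : w s' ≠ 0 := (Finset.mem_filter.mp hs').2
    have hPrpos : 0 < Pr s' := by
      rcases lt_or_eq_of_le (hPr0 s') with h | h
      · exact h
      · exact absurd (by simp [hwdef, ← h]) hwne
    exact ⟨s', hPrpos, rfl⟩
  have hmem := Finset.centerMass_mem_convexHull t (fun s' _ => hw0 s')
    (by rw [htsum]; norm_num) hz
  rwa [Finset.centerMass_eq_of_sum_1 _ _ htsum,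
    show ∑ s' ∈ t, w s' • z s' = ∑ s', w s' • z s' from
      Finset.sum_filter_of_ne (fun s' _ h => by
        intro hw; exact h (by rw [hw, zero_smul])),
    ← hcomb] at hmem
end

section
/- Let Π = (S, π) and Π' = (S', π') be experiments and suppose that for SOME full-support prior μ0 ∈ Δ(Θ), every posterior μ^Π_s (for s ∈ S with positive probability under (Π, μ0)) lies in the convex hull of { μ^{Π'}_{s'} : s' ∈ S' has positive probability under (Π', μ0) }. Then Π is a weighted garbling of Π' (there exists a weight γ ∈ Γ(Π') and a stochastic map φ: S' → Δ(S) with π(s|θ) = ∑_{s'} φ(s|s')γ(s')π'(s'|θ) for all s, θ). -/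
/-- Extracting a convex-combination representation with weights indexed by `S'`. -/
lemma exists_weights_of_mem_convexHull
    {Θ S' : Type*} [Fintype Θ] [Fintype S'] [Nonempty S']
    (π' : S' → Θ → ℝ) (μ0 : Θ → ℝ) (p : Θ → ℝ)
    (hp : p ∈ convexHull ℝ
        {μ : Θ → ℝ | ∃ s' : S', 0 < (∑ θ, π' s' θ * μ0 θ) ∧ μ = posterior π' μ0 s'}) :
    ∃ l : S' → ℝ, (∀ s', 0 ≤ l s') ∧
      (∀ s', 0 < l s' → 0 < ∑ θ, π' s' θ * μ0 θ) ∧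
      (∀ θ, p θ = ∑ s', l s' * posterior π' μ0 s' θ) := by
  classical
  rw [convexHull_eq] at hp
  obtain ⟨ι, t, w, z, hw0, hw1, hz, hcm⟩ := hp
  have hzc : ∀ i ∈ t, ∃ s' : S', 0 < (∑ θ, π' s' θ * μ0 θ) ∧ z i = posterior π' μ0 s' := hz
  set g : ι → S' := fun i => if h : i ∈ t then (hzc i h).choose else Classical.arbitrary S' with hg
  have hgp : ∀ i ∈ t, 0 < (∑ θ, π' (g i) θ * μ0 θ) ∧ z i = posterior π' μ0 (g i) := by
    intro i hi
    simp only [hg, dif_pos hi]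
    exact (hzc i hi).choose_spec
  refine ⟨fun s' => ∑ i ∈ t.filter (fun i => g i = s'), w i, ?_, ?_, ?_⟩
  · intro s'
    exact Finset.sum_nonneg fun i hi => hw0 i (Finset.mem_filter.mp hi).1
  · intro s' hpos
    obtain ⟨i, hi, _⟩ := Finset.exists_ne_zero_of_sum_ne_zero (ne_of_gt hpos)
    obtain ⟨hit, hgi⟩ := Finset.mem_filter.mp hi
    rw [← hgi]
    exact (hgp i hit).1
  · intro θ
    have hcm' : ∑ i ∈ t, w i • z i = p := by
      rw [← Finset.centerMass_eq_of_sum_1 t z hw1]; exact hcm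
    have hpθ : p θ = ∑ i ∈ t, w i * z i θ := by
      rw [← hcm']; simp [Finset.sum_apply]
    rw [hpθ]
    rw [← Finset.sum_fiberwise t g (fun i => w i * z i θ)]
    refine Finset.sum_congr rfl fun s' _ => ?_
    rw [Finset.sum_mul]
    refine Finset.sum_congr rfl fun i hi => ?_
    obtain ⟨hit, hgi⟩ := Finset.mem_filter.mp hi
    rw [(hgp i hit).2, hgi]

/-- if for SOME full-support prior μ0 every positive-probability posterior
of Π lies in the convex hull of the positive-probability posteriors of Π', then Π is a
weighted garbling of Π'. -/
theorem posteriors_in_convex_hull_implies_weighted_garbling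
    {Θ S S' : Type*} [Fintype Θ] [Nonempty Θ]
    [Fintype S] [Nonempty S] [Fintype S'] [Nonempty S']
    (π : S → Θ → ℝ) (π' : S' → Θ → ℝ)
    (hπ0 : ∀ s θ, 0 ≤ π s θ) (hπ1 : ∀ θ, ∑ s, π s θ = 1)
    (hπ'0 : ∀ s' θ, 0 ≤ π' s' θ) (hπ'1 : ∀ θ, ∑ s', π' s' θ = 1)
    -- some full-support prior μ0 for which the convex hull condition holds
    (μ0 : Θ → ℝ) (hμ0 : ∀ θ, 0 < μ0 θ) (hμ0sum : ∑ θ, μ0 θ = 1)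
    (hhull : ∀ s : S, 0 < ∑ θ, π s θ * μ0 θ →
      posterior π μ0 s ∈ convexHull ℝ
        {μ : Θ → ℝ | ∃ s' : S', 0 < (∑ θ, π' s' θ * μ0 θ) ∧ μ = posterior π' μ0 s'}) :
    -- Π is a weighted garbling of Π'
    ∃ γ : S' → ℝ, (∀ s', 0 ≤ γ s') ∧ (∀ θ, ∑ s', γ s' * π' s' θ = 1) ∧
      ∃ φ : S' → S → ℝ, (∀ s' s, 0 ≤ φ s' s) ∧ (∀ s', ∑ s, φ s' s = 1) ∧
        ∀ s θ, π s θ = ∑ s', φ s' s * γ s' * π' s' θ := by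
  classical
  -- weights from the convex hull condition
  have key : ∀ s : S, 0 < ∑ θ, π s θ * μ0 θ →
      ∃ l : S' → ℝ, (∀ s', 0 ≤ l s') ∧
        (∀ s', 0 < l s' → 0 < ∑ θ, π' s' θ * μ0 θ) ∧
        (∀ θ, posterior π μ0 s θ = ∑ s', l s' * posterior π' μ0 s' θ) :=
    fun s hs => exists_weights_of_mem_convexHull π' μ0 _ (hhull s hs)
  set β : S → S' → ℝ := fun s s' =>
    if hs : 0 < ∑ θ, π s θ * μ0 θ then
      (∑ θ, π s θ * μ0 θ) * (key s hs).choose s' / (∑ θ, π' s' θ * μ0 θ)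
    else 0 with hβ
  have hβ0 : ∀ s s', 0 ≤ β s s' := by
    intro s s'
    simp only [hβ]
    split
    · rename_i hs
      have hl := (key s hs).choose_spec.1 s'
      have hP' : 0 ≤ ∑ θ, π' s' θ * μ0 θ :=
        Finset.sum_nonneg fun θ _ => mul_nonneg (hπ'0 s' θ) (hμ0 θ).le
      positivity
    · exact le_refl 0
  -- zero probability signals have zero likelihood
  have hzero : ∀ s : S, ¬ (0 < ∑ θ, π s θ * μ0 θ) → ∀ θ, π s θ = 0 := by
    intro s hs θ
    have hnn : ∀ θ ∈ Finset.univ, 0 ≤ π s θ * μ0 θ :=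
      fun θ _ => mul_nonneg (hπ0 s θ) (hμ0 θ).le
    have hsum0 : ∑ θ, π s θ * μ0 θ = 0 :=
      le_antisymm (not_lt.mp hs) (Finset.sum_nonneg hnn)
    have := (Finset.sum_eq_zero_iff_of_nonneg hnn).mp hsum0 θ (Finset.mem_univ θ)
    exact (mul_eq_zero.mp this).resolve_right (ne_of_gt (hμ0 θ))
  have hzero' : ∀ s' : S', ¬ (0 < ∑ θ, π' s' θ * μ0 θ) → ∀ θ, π' s' θ = 0 := by
    intro s' hs θ
    have hnn : ∀ θ ∈ Finset.univ, 0 ≤ π' s' θ * μ0 θ :=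
      fun θ _ => mul_nonneg (hπ'0 s' θ) (hμ0 θ).le
    have hsum0 : ∑ θ, π' s' θ * μ0 θ = 0 :=
      le_antisymm (not_lt.mp hs) (Finset.sum_nonneg hnn)
    have := (Finset.sum_eq_zero_iff_of_nonneg hnn).mp hsum0 θ (Finset.mem_univ θ)
    exact (mul_eq_zero.mp this).resolve_right (ne_of_gt (hμ0 θ))
  -- the key representation
  have hrep : ∀ s θ, π s θ = ∑ s', β s s' * π' s' θ := by
    intro s θ
    by_cases hs : 0 < ∑ θ, π s θ * μ0 θ
    · obtain ⟨hl0, hlpos, hleq⟩ := (key s hs).choose_spec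
      set l := (key s hs).choose
      set P := ∑ θ, π s θ * μ0 θ
      have hpost := hleq θ
      have hμθ := hμ0 θ
      -- posterior π μ0 s θ = π s θ * μ0 θ / P
      have h1 : π s θ * μ0 θ / P = ∑ s', l s' * (π' s' θ * μ0 θ / (∑ θ', π' s' θ' * μ0 θ')) := by
        simpa [posterior] using hpost
      have h2 : π s θ = (P / μ0 θ) * (π s θ * μ0 θ / P) := by
        field_simp
      rw [h2, h1, Finset.mul_sum]
      refine Finset.sum_congr rfl fun s' _ => ?_
      simp only [hβ, dif_pos (show 0 < ∑ θ, π s θ * μ0 θ from hs)]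
      by_cases hP' : 0 < ∑ θ', π' s' θ' * μ0 θ'
      · field_simp
        ring
      · rw [hzero' s' hP' θ]
        ring
    · rw [hzero s hs θ]
      refine (Finset.sum_eq_zero fun s' _ => ?_).symm
      simp [hβ, dif_neg hs]
  set γ : S' → ℝ := fun s' => ∑ s, β s s' with hγ
  have hγ0 : ∀ s', 0 ≤ γ s' := fun s' => Finset.sum_nonneg fun s _ => hβ0 s s'
  have hγw : ∀ θ, ∑ s', γ s' * π' s' θ = 1 := by
    intro θ
    calc ∑ s', γ s' * π' s' θ = ∑ s', ∑ s, β s s' * π' s' θ := by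
          refine Finset.sum_congr rfl fun s' _ => ?_
          rw [hγ]; rw [Finset.sum_mul]
      _ = ∑ s, ∑ s', β s s' * π' s' θ := Finset.sum_comm
      _ = ∑ s, π s θ := Finset.sum_congr rfl fun s _ => (hrep s θ).symm
      _ = 1 := hπ1 θ
  have hβγ0 : ∀ s', γ s' = 0 → ∀ s, β s s' = 0 := by
    intro s' h s
    exact (Finset.sum_eq_zero_iff_of_nonneg (fun s _ => hβ0 s s')).mp h s (Finset.mem_univ s)
  set φ : S' → S → ℝ := fun s' s =>
    if γ s' = 0 then ((Fintype.card S : ℝ))⁻¹ else β s s' / γ s' with hφ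
  refine ⟨γ, hγ0, hγw, φ, ?_, ?_, ?_⟩
  · intro s' s
    simp only [hφ]
    split
    · positivity
    · exact div_nonneg (hβ0 s s') (hγ0 s')
  · intro s'
    by_cases h : γ s' = 0
    · simp only [hφ, if_pos h]
      rw [Finset.sum_const, nsmul_eq_mul, Finset.card_univ]
      rw [mul_inv_cancel₀]
      exact_mod_cast Fintype.card_ne_zero
    · simp only [hφ, if_neg h]
      rw [← Finset.sum_div]
      exact div_self h
  · intro s θ
    rw [hrep s θ]
    refine Finset.sum_congr rfl fun s' _ => ?_
    by_cases h : γ s' = 0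
    · simp [hφ, if_pos h, h, hβγ0 s' h s]
    · simp only [hφ, if_neg h]
      rw [div_mul_cancel₀ _ h]
end

section
/- Suppose the experiment Π = (S, π) is a weighted garbling of the experiment Π' = (S', π') with weight γ ∈ Γ(Π') of size at most β (β ≥ 1). Then for every static decision problem A = (A, u, μ0) with full-support prior, V^A(Π') ≥ (1/β)·V^A(Π) + (1 − 1/β)·V^A(∅). -/
/-!
The value `max_a ∑ θ, u a θ p θ μ0 θ` of an unnormalised signal distribution `p` is sublinear
in `p`: the value of a nonnegative mixture of signals is at most the mixture of their values.
Write `g s'` for the value of the signal `s'` of `Π'`. Each signal `s` of `Π` is the mixture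
`∑ s', φ s' s γ s' · π' s'`, so `V(Π) ≤ ∑ s', γ s' g s'`. The constant `1 - 1/β` is the mixture
`∑ s', (1 - γ s' / β) π' s'`, whose coefficients are nonnegative because `γ ≤ β`, so
`(1 - 1/β) V(∅) ≤ ∑ s', (1 - γ s' / β) g s'`. Adding `1/β` times the first bound to the second
leaves `∑ s', g s' = V(Π')` on the right.
-/

open Finset

section

variable {Θ ι A : Type*} [Fintype Θ] [Fintype ι] [Finite A] [Nonempty A]

theorem iSup_sum_mul_le_sum_mul_iSup (c : ι → ℝ) (hc : ∀ i, 0 ≤ c i) (f : ι → A → ℝ) :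
    ⨆ a, ∑ i, c i * f i a ≤ ∑ i, c i * ⨆ a, f i a :=
  ciSup_le fun a => sum_le_sum fun i _ =>
    mul_le_mul_of_nonneg_left (le_ciSup (Finite.bddAbove_range (f i)) a) (hc i)

theorem iSup_payoff_mixture_le (u : A → Θ → ℝ) (μ0 : Θ → ℝ) (w : ι → ℝ) (hw : ∀ i, 0 ≤ w i)
    (p : ι → Θ → ℝ) :
    ⨆ a, ∑ θ, u a θ * (∑ i, w i * p i θ) * μ0 θ ≤
      ∑ i, w i * ⨆ a, ∑ θ, u a θ * p i θ * μ0 θ := by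
  have hmix : ∀ a, ∑ θ, u a θ * (∑ i, w i * p i θ) * μ0 θ =
      ∑ i, w i * ∑ θ, u a θ * p i θ * μ0 θ := fun a => by
    simp only [mul_sum, sum_mul]
    rw [sum_comm]
    exact sum_congr rfl fun _ _ => sum_congr rfl fun _ _ => by ring
  simp only [hmix]
  exact iSup_sum_mul_le_sum_mul_iSup w hw _

end

section

variable {Θ S S' A : Type*} [Fintype Θ] [Fintype S] [Fintype S'] [Finite A] [Nonempty A]
  (u : A → Θ → ℝ) (μ0 : Θ → ℝ) (π : S → Θ → ℝ) (π' : S' → Θ → ℝ) (γ : S' → ℝ)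

theorem sum_iSup_payoff_le_of_weighted_garbling (hγ0 : ∀ s', 0 ≤ γ s') (φ : S' → S → ℝ)
    (hφ0 : ∀ s' s, 0 ≤ φ s' s) (hφ1 : ∀ s', ∑ s, φ s' s = 1)
    (hwg : ∀ s θ, π s θ = ∑ s', φ s' s * γ s' * π' s' θ) :
    ∑ s, ⨆ a, ∑ θ, u a θ * π s θ * μ0 θ ≤
      ∑ s', γ s' * ⨆ a, ∑ θ, u a θ * π' s' θ * μ0 θ := by
  calc ∑ s, ⨆ a, ∑ θ, u a θ * π s θ * μ0 θ
      ≤ ∑ s, ∑ s', φ s' s * γ s' * ⨆ a, ∑ θ, u a θ * π' s' θ * μ0 θ := by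
        refine sum_le_sum fun s _ => ?_
        simp only [hwg s]
        exact iSup_payoff_mixture_le u μ0 _ (fun s' => mul_nonneg (hφ0 s' s) (hγ0 s')) π'
    _ = ∑ s', γ s' * ⨆ a, ∑ θ, u a θ * π' s' θ * μ0 θ := by
        rw [sum_comm]
        refine sum_congr rfl fun s' _ => ?_
        simp only [mul_assoc, ← sum_mul, hφ1 s', one_mul]

theorem mul_iSup_payoff_prior_le {β : ℝ} (hβ1 : 1 ≤ β) (hsize : ∀ s', γ s' ≤ β)
    (hπ'1 : ∀ θ, ∑ s', π' s' θ = 1) (hγ1 : ∀ θ, ∑ s', γ s' * π' s' θ = 1) :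
    (1 - 1 / β) * ⨆ a, ∑ θ, u a θ * μ0 θ ≤
      ∑ s', (1 - γ s' / β) * ⨆ a, ∑ θ, u a θ * π' s' θ * μ0 θ := by
  have hβ0 : 0 < β := zero_lt_one.trans_le hβ1
  have hmass : ∀ θ, ∑ s', (1 - γ s' / β) * π' s' θ = 1 - 1 / β := fun θ => by
    simp only [sub_mul, one_mul, sum_sub_distrib, hπ'1, div_mul_eq_mul_div, ← sum_div, hγ1]
  have hprior : ∀ a, (1 - 1 / β) * ∑ θ, u a θ * μ0 θ =
      ∑ θ, u a θ * (∑ s', (1 - γ s' / β) * π' s' θ) * μ0 θ := fun a => by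
    simp only [hmass, mul_sum]
    exact sum_congr rfl fun _ _ => by ring
  rw [Real.mul_iSup_of_nonneg (sub_nonneg.mpr ((div_le_one hβ0).mpr hβ1))]
  simp only [hprior]
  exact iSup_payoff_mixture_le u μ0 _ (fun s' => sub_nonneg.mpr ((div_le_one hβ0).mpr (hsize s'))) π'

end

theorem weighted_garbling_value_bound_general
    {Θ S S' : Type*} [Fintype Θ]
    [Fintype S] [Fintype S']
    (π : S → Θ → ℝ) (π' : S' → Θ → ℝ)
    (hπ'1 : ∀ θ, ∑ s', π' s' θ = 1)
    -- Π is a weighted garbling of Π' with weight γ of size at most β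
    (γ : S' → ℝ) (hγ0 : ∀ s', 0 ≤ γ s') (hγ1 : ∀ θ, ∑ s', γ s' * π' s' θ = 1)
    (β : ℝ) (hβ1 : 1 ≤ β) (hsize : ∀ s', γ s' ≤ β)
    (φ : S' → S → ℝ) (hφ0 : ∀ s' s, 0 ≤ φ s' s) (hφ1 : ∀ s', ∑ s, φ s' s = 1)
    (hwg : ∀ s θ, π s θ = ∑ s', φ s' s * γ s' * π' s' θ)
    -- a static decision problem with full-support prior
    (A : Type*) [Fintype A] [Nonempty A] (u : A → Θ → ℝ)
    (μ0 : Θ → ℝ) :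
    (∑ s', ⨆ a : A, ∑ θ, u a θ * π' s' θ * μ0 θ) ≥
      (1 / β) * (∑ s, ⨆ a : A, ∑ θ, u a θ * π s θ * μ0 θ)
        + (1 - 1 / β) * (⨆ a : A, ∑ θ, u a θ * μ0 θ) := by
  set g : S' → ℝ := fun s' => ⨆ a : A, ∑ θ, u a θ * π' s' θ * μ0 θ
  have hgarbling := sum_iSup_payoff_le_of_weighted_garbling u μ0 π π' γ hγ0 φ hφ0 hφ1 hwg
  have hnull := mul_iSup_payoff_prior_le u μ0 π' γ hβ1 hsize hπ'1 hγ1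
  have hsplit : ∑ s', g s' = 1 / β * ∑ s', γ s' * g s' + ∑ s', (1 - γ s' / β) * g s' := by
    rw [mul_sum, ← sum_add_distrib]
    exact sum_congr rfl fun _ _ => by ring
  have hscaled := mul_le_mul_of_nonneg_left hgarbling (one_div_nonneg.mpr (zero_le_one.trans hβ1))
  linarith

/-- "only if" part of Theorem (value comparison): if Π is a weighted
garbling of Π' with weight γ of size at most β (β ≥ 1), then for every static decision
problem with full-support prior, V^A(Π') ≥ (1/β)·V^A(Π) + (1 − 1/β)·V^A(∅). -/
theorem weighted_garbling_value_bound
    {Θ S S' : Type*} [Fintype Θ] [Nonempty Θ]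
    [Fintype S] [Nonempty S] [Fintype S'] [Nonempty S']
    (π : S → Θ → ℝ) (π' : S' → Θ → ℝ)
    (hπ0 : ∀ s θ, 0 ≤ π s θ) (hπ1 : ∀ θ, ∑ s, π s θ = 1)
    (hπ'0 : ∀ s' θ, 0 ≤ π' s' θ) (hπ'1 : ∀ θ, ∑ s', π' s' θ = 1)
    -- Π is a weighted garbling of Π' with weight γ of size at most β
    (γ : S' → ℝ) (hγ0 : ∀ s', 0 ≤ γ s') (hγ1 : ∀ θ, ∑ s', γ s' * π' s' θ = 1)
    (β : ℝ) (hβ1 : 1 ≤ β) (hsize : ∀ s', γ s' ≤ β)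
    (φ : S' → S → ℝ) (hφ0 : ∀ s' s, 0 ≤ φ s' s) (hφ1 : ∀ s', ∑ s, φ s' s = 1)
    (hwg : ∀ s θ, π s θ = ∑ s', φ s' s * γ s' * π' s' θ)
    -- a static decision problem with full-support prior
    (A : Type*) [Fintype A] [Nonempty A] (u : A → Θ → ℝ)
    (μ0 : Θ → ℝ) (hμ0 : ∀ θ, 0 < μ0 θ) (hμ0sum : ∑ θ, μ0 θ = 1) :
    (∑ s', ⨆ a : A, ∑ θ, u a θ * π' s' θ * μ0 θ) ≥
      (1 / β) * (∑ s, ⨆ a : A, ∑ θ, u a θ * π s θ * μ0 θ)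
        + (1 - 1 / β) * (⨆ a : A, ∑ θ, u a θ * μ0 θ) :=
  weighted_garbling_value_bound_general π π' hπ'1 γ hγ0 hγ1 β hβ1 hsize φ hφ0 hφ1 hwg A u μ0
end

section
/- Let Π = (S, π) and Π' = (S', π') be experiments and β ≥ 1. If V^A(Π') ≥ (1/β)·V^A(Π) + (1 − 1/β)·V^A(∅) holds for every static decision problem A = (A, u, μ0) (every finite action set, utility, and full-support prior), then Π is a weighted garbling of Π' with a weight of size at most β. -/
/-- "if" part of Theorem (value comparison): if
V^A(Π') ≥ (1/β)·V^A(Π) + (1 − 1/β)·V^A(∅) for every static decision problem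
(every finite action set, utility, and full-support prior), then Π is a weighted
garbling of Π' with a weight of size at most β. -/
theorem value_bound_implies_weighted_garbling
    {Θ S S' : Type*} [Fintype Θ] [Nonempty Θ]
    [Fintype S] [Nonempty S] [Fintype S'] [Nonempty S']
    (π : S → Θ → ℝ) (π' : S' → Θ → ℝ)
    (hπ0 : ∀ s θ, 0 ≤ π s θ) (hπ1 : ∀ θ, ∑ s, π s θ = 1)
    (hπ'0 : ∀ s' θ, 0 ≤ π' s' θ) (hπ'1 : ∀ θ, ∑ s', π' s' θ = 1)
    (β : ℝ) (hβ1 : 1 ≤ β)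
    (hval : ∀ (A : Type) [Fintype A] [Nonempty A] (u : A → Θ → ℝ) (μ0 : Θ → ℝ),
      (∀ θ, 0 < μ0 θ) → (∑ θ, μ0 θ = 1) →
      (∑ s', ⨆ a : A, ∑ θ, u a θ * π' s' θ * μ0 θ) ≥
        (1 / β) * (∑ s, ⨆ a : A, ∑ θ, u a θ * π s θ * μ0 θ)
          + (1 - 1 / β) * (⨆ a : A, ∑ θ, u a θ * μ0 θ)) :
    -- Π is a weighted garbling of Π' with a weight of size at most β
    ∃ γ : S' → ℝ, (∀ s', 0 ≤ γ s') ∧ (∀ θ, ∑ s', γ s' * π' s' θ = 1) ∧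
      (∀ s', γ s' ≤ β) ∧
      ∃ φ : S' → S → ℝ, (∀ s' s, 0 ≤ φ s' s) ∧ (∀ s', ∑ s, φ s' s = 1) ∧
        ∀ s θ, π s θ = ∑ s', φ s' s * γ s' * π' s' θ := by
  classical
  have hβ0 : (0:ℝ) ≤ β := le_trans zero_le_one hβ1
  have hβpos : (0:ℝ) < β := lt_of_lt_of_le one_pos hβ1
  -- the feasible set of "joint weights"
  set K : Set ((S × S') → ℝ) :=
    {ψ | (∀ p, 0 ≤ ψ p) ∧ ∀ s', ∑ s, ψ (s, s') ≤ β} with hK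
  -- the linear map ψ ↦ (s,θ) ↦ ∑ s', ψ(s,s') π'(s'|θ)
  let Lmap : ((S × S') → ℝ) →ₗ[ℝ] ((S × Θ) → ℝ) :=
    { toFun := fun ψ p => ∑ s', ψ (p.1, s') * π' s' p.2
      map_add' := by
        intro ψ χ; funext p
        simp [add_mul, Finset.sum_add_distrib]
      map_smul' := by
        intro c ψ; funext p
        simp [Finset.mul_sum, mul_assoc] }
  have hLapp : ∀ ψ p, Lmap ψ p = ∑ s', ψ (p.1, s') * π' s' p.2 := fun _ _ => rfl
  -- K is compact
  have hKsub : K ⊆ Set.pi Set.univ (fun _ : S × S' => Set.Icc (0:ℝ) β) := by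
    intro ψ hψ p _
    refine ⟨hψ.1 p, ?_⟩
    calc ψ p = ψ (p.1, p.2) := by rfl
      _ ≤ ∑ s, ψ (s, p.2) := by
          refine Finset.single_le_sum (f := fun s => ψ (s, p.2)) ?_ (Finset.mem_univ _)
          intro i _; exact hψ.1 _
      _ ≤ β := hψ.2 p.2
  have hKclosed : IsClosed K := by
    have h1 : IsClosed {ψ : (S × S') → ℝ | ∀ p, 0 ≤ ψ p} := by
      have : {ψ : (S × S') → ℝ | ∀ p, 0 ≤ ψ p} = ⋂ p, {ψ | 0 ≤ ψ p} := by
        ext ψ; simp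
      rw [this]
      exact isClosed_iInter fun p => isClosed_le continuous_const (continuous_apply p)
    have h2 : IsClosed {ψ : (S × S') → ℝ | ∀ s', ∑ s, ψ (s, s') ≤ β} := by
      have : {ψ : (S × S') → ℝ | ∀ s', ∑ s, ψ (s, s') ≤ β}
          = ⋂ s', {ψ | ∑ s, ψ (s, s') ≤ β} := by ext ψ; simp
      rw [this]
      exact isClosed_iInter fun s' => isClosed_le
        (by exact continuous_finset_sum _ fun s _ => continuous_apply (s, s'))
        continuous_const
    have : K = {ψ : (S × S') → ℝ | ∀ p, 0 ≤ ψ p}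
        ∩ {ψ | ∀ s', ∑ s, ψ (s, s') ≤ β} := by
      ext ψ; exact Iff.rfl
    rw [this]; exact h1.inter h2
  have hKcomp : IsCompact K := by
    refine IsCompact.of_isClosed_subset ?_ hKclosed hKsub
    exact isCompact_univ_pi fun _ => isCompact_Icc
  have hKconv : Convex ℝ K := by
    intro ψ hψ χ hχ a b ha hb hab
    constructor
    · intro p
      have h1 := hψ.1 p; have h2 := hχ.1 p
      have : (a • ψ + b • χ) p = a * ψ p + b * χ p := rfl
      rw [this]; positivity
    · intro s'
      have : ∑ s, (a • ψ + b • χ) (s, s') = a * ∑ s, ψ (s, s') + b * ∑ s, χ (s, s') := by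
        simp [Finset.mul_sum, Finset.sum_add_distrib]
      rw [this]
      nlinarith [hψ.2 s', hχ.2 s']
  have hLcont : Continuous Lmap := Lmap.continuous_of_finiteDimensional
  have hCcomp : IsCompact (Lmap '' K) := hKcomp.image hLcont
  have hCconv : Convex ℝ (Lmap '' K) := hKconv.linear_image Lmap
  -- key claim: π ∈ Lmap '' K, by separation
  have hmem : (fun p : S × Θ => π p.1 p.2) ∈ Lmap '' K := by
    by_contra hnot
    obtain ⟨f, u, hfC, hfx⟩ :=
      geometric_hahn_banach_closed_point hCconv hCcomp.isClosed hnot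
    -- expand f as a sum against coordinates
    set w : S → Θ → ℝ := fun s θ => f (fun q => if (s, θ) = q then (1:ℝ) else 0) with hw
    have hf : ∀ x : (S × Θ) → ℝ, f x = ∑ s, ∑ θ, x (s, θ) * w s θ := by
      intro x
      conv_lhs => rw [pi_eq_sum_univ x]
      rw [map_sum, Fintype.sum_prod_type]
      refine Finset.sum_congr rfl fun s _ => Finset.sum_congr rfl fun θ _ => ?_
      rw [map_smul, smul_eq_mul]
    set T : S → S' → ℝ := fun s s' => ∑ θ, w s θ * π' s' θ with hT
    -- the argmax selection
    have hσex : ∀ s' : S', ∃ s : S, ∀ s₁ : S, T s₁ s' ≤ T s s' := fun s' =>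
      Finite.exists_max (fun s => T s s')
    choose σ hσ using hσex
    set c : S' → ℝ := fun s' => if 0 ≤ T (σ s') s' then β else 0 with hc
    set ψs : (S × S') → ℝ := fun p => if p.1 = σ p.2 then c p.2 else 0 with hψs
    have hc0 : ∀ s', 0 ≤ c s' := by
      intro s'
      rw [show c s' = if 0 ≤ T (σ s') s' then β else 0 from rfl]
      split_ifs <;> simp [hβ0]
    have hcβ : ∀ s', c s' ≤ β := by
      intro s'
      rw [show c s' = if 0 ≤ T (σ s') s' then β else 0 from rfl]
      split_ifs <;> simp [hβ0]
    have hψapp : ∀ p : S × S', ψs p = if p.1 = σ p.2 then c p.2 else 0 := fun _ => rfl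
    have hcmem : ψs ∈ K := by
      constructor
      · intro p
        rw [hψapp]
        split_ifs
        · exact hc0 _
        · exact le_refl 0
      · intro s'
        have hsum : ∑ s, ψs (s, s') = c s' := by
          simp only [hψapp]
          rw [Finset.sum_ite_eq' Finset.univ (σ s') (fun _ => c s')]
          simp
        rw [hsum]
        exact hcβ s'
    have hfψ : f (Lmap ψs) = ∑ s', c s' * T (σ s') s' := by
      calc f (Lmap ψs) = ∑ s, ∑ θ, Lmap ψs (s, θ) * w s θ := hf _
        _ = ∑ s, ∑ θ, ∑ s', ψs (s, s') * (w s θ * π' s' θ) := by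
            refine Finset.sum_congr rfl fun s _ => Finset.sum_congr rfl fun θ _ => ?_
            rw [hLapp, Finset.sum_mul]
            exact Finset.sum_congr rfl fun s' _ => by ring
        _ = ∑ s, ∑ s', ψs (s, s') * T s s' := by
            refine Finset.sum_congr rfl fun s _ => ?_
            rw [Finset.sum_comm]
            refine Finset.sum_congr rfl fun s' _ => ?_
            rw [← Finset.mul_sum]
        _ = ∑ s', ∑ s, ψs (s, s') * T s s' := Finset.sum_comm
        _ = ∑ s', c s' * T (σ s') s' := by
            refine Finset.sum_congr rfl fun s' _ => ?_
            simp only [hψapp, ite_mul, zero_mul]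
            rw [Finset.sum_ite_eq' Finset.univ (σ s') (fun s => c s' * T s s')]
            simp
    have hcT : ∀ s', c s' * T (σ s') s' = β * max (T (σ s') s') 0 := by
      intro s'
      rw [show c s' = if 0 ≤ T (σ s') s' then β else 0 from rfl]
      rcases le_or_gt 0 (T (σ s') s') with h | h
      · rw [if_pos h, max_eq_left h]
      · rw [if_neg (not_le.mpr h), max_eq_right h.le, zero_mul, mul_zero]
    -- the decision problem
    set n : ℕ := Fintype.card Θ with hn
    have hnpos : 0 < n := Fintype.card_pos
    have hnne : (n:ℝ) ≠ 0 := Nat.cast_ne_zero.mpr hnpos.ne'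
    set m : ℕ := Fintype.card S with hm
    set es : S ≃ Fin m := Fintype.equivFin S with hes
    set uu : Option (Fin m) → Θ → ℝ :=
      fun a θ => Option.elim a 0 (fun i => (n:ℝ) * w (es.symm i) θ) with huu
    set μ0 : Θ → ℝ := fun _ => (n:ℝ)⁻¹ with hμ0
    have hμpos : ∀ θ, 0 < μ0 θ := fun θ => by
      rw [hμ0]; exact inv_pos.mpr (Nat.cast_pos.mpr hnpos)
    have hμsum : ∑ θ, μ0 θ = 1 := by
      simp [hμ0, Finset.sum_const, Finset.card_univ, ← hn, hnne]
    have hterm : ∀ (q : Θ → ℝ) (i : Fin m), ∑ θ, uu (some i) θ * q θ * μ0 θ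
        = ∑ θ, w (es.symm i) θ * q θ := by
      intro q i
      refine Finset.sum_congr rfl fun θ _ => ?_
      rw [huu, hμ0]
      simp only [Option.elim]
      field_simp
    have hterm0 : ∀ (q : Θ → ℝ), ∑ θ, uu none θ * q θ * μ0 θ = 0 := by
      intro q
      simp [huu]
    have hbdd : ∀ (g : Option (Fin m) → ℝ), BddAbove (Set.range g) := fun g =>
      Set.Finite.bddAbove (Set.finite_range g)
    -- upper bound for the Π' value
    have hub : ∀ s', (⨆ a : Option (Fin m), ∑ θ, uu a θ * π' s' θ * μ0 θ)
        ≤ max (T (σ s') s') 0 := by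
      intro s'
      refine ciSup_le fun a => ?_
      cases a with
      | none => rw [hterm0]; exact le_max_right _ _
      | some i =>
          rw [hterm]
          exact le_trans (hσ s' (es.symm i)) (le_max_left _ _)
    -- lower bound for the Π value
    have hlb : ∀ s : S, (∑ θ, w s θ * π s θ)
        ≤ ⨆ a : Option (Fin m), ∑ θ, uu a θ * π s θ * μ0 θ := by
      intro s
      have h1 := le_ciSup (hbdd fun a => ∑ θ, uu a θ * π s θ * μ0 θ) (some (es s))
      rw [hterm (fun θ => π s θ) (es s), Equiv.symm_apply_apply] at h1
      exact h1
    have hlb0 : (0:ℝ) ≤ ⨆ a : Option (Fin m), ∑ θ, uu a θ * μ0 θ := by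
      have h1 := le_ciSup (hbdd fun a => ∑ θ, uu a θ * μ0 θ) (none : Option (Fin m))
      have h0 : ∑ θ, uu (none : Option (Fin m)) θ * μ0 θ = 0 := by simp [huu]
      rwa [h0] at h1
    have H := hval (Option (Fin m)) uu μ0 hμpos hμsum
    -- assemble the contradiction
    have hx : f (fun p : S × Θ => π p.1 p.2) = ∑ s, ∑ θ, π s θ * w s θ := hf _
    have hA : (∑ s', ⨆ a : Option (Fin m), ∑ θ, uu a θ * π' s' θ * μ0 θ)
        ≤ (1/β) * f (Lmap ψs) := by
      rw [hfψ]
      have : ∑ s', c s' * T (σ s') s' = β * ∑ s', max (T (σ s') s') 0 := by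
        rw [Finset.mul_sum]
        exact Finset.sum_congr rfl fun s' _ => hcT s'
      rw [this]
      rw [one_div, inv_mul_cancel_left₀ hβpos.ne']
      exact Finset.sum_le_sum fun s' _ => hub s'
    have hB : f (fun p : S × Θ => π p.1 p.2)
        ≤ ∑ s, ⨆ a : Option (Fin m), ∑ θ, uu a θ * π s θ * μ0 θ := by
      rw [hx]
      refine Finset.sum_le_sum fun s _ => ?_
      refine le_trans (le_of_eq ?_) (hlb s)
      exact Finset.sum_congr rfl fun θ _ => mul_comm _ _
    have hC' : f (Lmap ψs) < u := hfC _ ⟨ψs, hcmem, rfl⟩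
    have hβinv : (0:ℝ) < 1/β := by positivity
    have h1β : 0 ≤ 1 - 1/β := by
      have : 1/β ≤ 1 := by
        rw [div_le_one hβpos]; exact hβ1
      linarith
    have k1 := mul_le_mul_of_nonneg_left hB (le_of_lt hβinv)
    have k2 := mul_nonneg h1β hlb0
    have k3 := mul_lt_mul_of_pos_left hC' hβinv
    have k4 := mul_lt_mul_of_pos_left hfx hβinv
    linarith [H, hA, k1, k2, k3, k4]
  -- extract the garbling
  obtain ⟨ψ, ⟨hψ0, hψβ⟩, hψeq⟩ := hmem
  have hψπ : ∀ s θ, ∑ s', ψ (s, s') * π' s' θ = π s θ := by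
    intro s θ
    have := congrFun hψeq (s, θ)
    rwa [hLapp] at this
  set γ : S' → ℝ := fun s' => ∑ s, ψ (s, s') with hγ
  have hγ0 : ∀ s', 0 ≤ γ s' := fun s' => Finset.sum_nonneg fun s _ => hψ0 _
  set φ : S' → S → ℝ := fun s' s =>
    if γ s' = 0 then (Fintype.card S : ℝ)⁻¹ else ψ (s, s') / γ s' with hφ
  have hφapp : ∀ s' s, φ s' s
      = if γ s' = 0 then (Fintype.card S : ℝ)⁻¹ else ψ (s, s') / γ s' :=
    fun _ _ => rfl
  have hγapp : ∀ s', γ s' = ∑ s, ψ (s, s') := fun _ => rfl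
  refine ⟨γ, hγ0, ?_, hψβ, φ, ?_, ?_, ?_⟩
  · intro θ
    have h1 : ∑ s', γ s' * π' s' θ = ∑ s', ∑ s, ψ (s, s') * π' s' θ := by
      refine Finset.sum_congr rfl fun s' _ => ?_
      rw [hγapp, Finset.sum_mul]
    rw [h1, Finset.sum_comm]
    calc ∑ s, ∑ s', ψ (s, s') * π' s' θ = ∑ s, π s θ :=
          Finset.sum_congr rfl fun s _ => hψπ s θ
      _ = 1 := hπ1 θ
  · intro s' s
    rw [hφapp]
    split_ifs
    · positivity
    · exact div_nonneg (hψ0 _) (hγ0 s')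
  · intro s'
    rcases eq_or_ne (γ s') 0 with h | h
    · have : ∀ s, φ s' s = (Fintype.card S : ℝ)⁻¹ := by
        intro s; rw [hφapp, if_pos h]
      rw [Finset.sum_congr rfl fun s _ => this s]
      rw [Finset.sum_const, Finset.card_univ, nsmul_eq_mul]
      have hcard : (Fintype.card S : ℝ) ≠ 0 :=
        Nat.cast_ne_zero.mpr Fintype.card_pos.ne'
      field_simp
    · have : ∀ s, φ s' s = ψ (s, s') / γ s' := by
        intro s; rw [hφapp, if_neg h]
      rw [Finset.sum_congr rfl fun s _ => this s]
      rw [← Finset.sum_div, ← hγapp, div_self h]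
  · intro s θ
    rw [← hψπ s θ]
    refine Finset.sum_congr rfl fun s' _ => ?_
    rcases eq_or_ne (γ s') 0 with h | h
    · have hz : ψ (s, s') = 0 := by
        have h0 : ∑ s₁, ψ (s₁, s') = 0 := by rw [← hγapp]; exact h
        exact (Finset.sum_eq_zero_iff_of_nonneg
          (fun s₁ _ => hψ0 (s₁, s'))).mp h0 s (Finset.mem_univ s)
      rw [h, hz]
      ring
    · rw [hφapp, if_neg h, div_mul_cancel₀ _ h]
end

section
/- Suppose Π = (S, π) is a weighted garbling of Π' = (S', π') with weight γ ∈ Γ(Π') witnessed by the stochastic map φ: S' → Δ(S), and let γ̄ = max_{s'} γ(s') with γ̄ > 1. Define Π̃'(γ) = (S', π̃') by π̃'(s'|θ) = ((1 − γ(s')/γ̄)/(1 − 1/γ̄))·π'(s'|θ). Then: (a) Π̃'(γ) is an experiment (π̃'(s'|θ) ≥ 0 and ∑_{s'} π̃'(s'|θ) = 1 for every θ); and (b) for any static decision problem A = (A, u, μ0) and any strategies σ: S → Δ(A) and σ': S' → Δ(A), the strategy σ̄: S' → Δ(A) defined by σ̄(s') = (γ(s')/γ̄)·∑_{s∈S}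 φ(s|s')σ(s) + (1 − γ(s')/γ̄)·σ'(s') satisfies U^A(σ̄; Π') = (1/γ̄)·U^A(σ; Π) + (1 − 1/γ̄)·U^A(σ'; Π̃'(γ)). -/
/-- let Π be a weighted garbling of Π' with weight γ witnessed by φ, and
γ̄ = max γ with γ̄ > 1. Then the auxiliary experiment Π̃'(γ) given by
π̃'(s'|θ) = ((1 − γ(s')/γ̄)/(1 − 1/γ̄))·π'(s'|θ) is a well-defined experiment, and for
any decision problem and strategies σ (for Π) and σ' (for Π̃'(γ)), the mixed strategy
σ̄(s') = (γ(s')/γ̄)·∑_s φ(s|s')σ(s) + (1 − γ(s')/γ̄)·σ'(s') is a valid strategy for Π'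
with U^A(σ̄; Π') = (1/γ̄)·U^A(σ; Π) + (1 − 1/γ̄)·U^A(σ'; Π̃'(γ)). -/
theorem mixed_strategy_payoff_decomposition
    {Θ S S' : Type*} [Fintype Θ] [Nonempty Θ]
    [Fintype S] [Nonempty S] [Fintype S'] [Nonempty S']
    (π : S → Θ → ℝ) (π' : S' → Θ → ℝ)
    (hπ0 : ∀ s θ, 0 ≤ π s θ) (hπ1 : ∀ θ, ∑ s, π s θ = 1)
    (hπ'0 : ∀ s' θ, 0 ≤ π' s' θ) (hπ'1 : ∀ θ, ∑ s', π' s' θ = 1)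
    -- Π is a weighted garbling of Π' with weight γ, witnessed by φ
    (γ : S' → ℝ) (hγ0 : ∀ s', 0 ≤ γ s') (hγ1 : ∀ θ, ∑ s', γ s' * π' s' θ = 1)
    (φ : S' → S → ℝ) (hφ0 : ∀ s' s, 0 ≤ φ s' s) (hφ1 : ∀ s', ∑ s, φ s' s = 1)
    (hwg : ∀ s θ, π s θ = ∑ s', φ s' s * γ s' * π' s' θ)
    (γbar : ℝ) (hγbar : IsGreatest (Set.range γ) γbar) (hγbar1 : 1 < γbar)
    -- the auxiliary experiment Π̃'(γ)
    (πtil : S' → Θ → ℝ)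
    (hπtil : πtil = fun s' θ => ((1 - γ s' / γbar) / (1 - 1 / γbar)) * π' s' θ)
    -- a static decision problem with full-support prior
    (A : Type*) [Fintype A] [Nonempty A] (u : A → Θ → ℝ)
    (μ0 : Θ → ℝ) (hμ0 : ∀ θ, 0 < μ0 θ) (hμ0sum : ∑ θ, μ0 θ = 1)
    -- strategies σ for Π and σ' for Π̃'(γ)
    (σ : S → A → ℝ) (hσ0 : ∀ s a, 0 ≤ σ s a) (hσ1 : ∀ s, ∑ a, σ s a = 1)
    (σ' : S' → A → ℝ) (hσ'0 : ∀ s' a, 0 ≤ σ' s' a) (hσ'1 : ∀ s', ∑ a, σ' s' a = 1)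
    -- the mixed strategy σ̄
    (σbar : S' → A → ℝ)
    (hσbar : σbar = fun s' a =>
      (γ s' / γbar) * (∑ s, φ s' s * σ s a) + (1 - γ s' / γbar) * σ' s' a) :
    -- (a) Π̃'(γ) is an experiment
    (∀ s' θ, 0 ≤ πtil s' θ) ∧ (∀ θ, ∑ s', πtil s' θ = 1) ∧
    -- σ̄ is a valid strategy
    (∀ s' a, 0 ≤ σbar s' a) ∧ (∀ s', ∑ a, σbar s' a = 1) ∧
    -- (b) the payoff decomposition
    (∑ s', ∑ θ, (∑ a, u a θ * σbar s' a) * π' s' θ * μ0 θ) =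
      (1 / γbar) * (∑ s, ∑ θ, (∑ a, u a θ * σ s a) * π s θ * μ0 θ)
        + (1 - 1 / γbar) * (∑ s', ∑ θ, (∑ a, u a θ * σ' s' a) * πtil s' θ * μ0 θ) := by
  have hγb0 : (0:ℝ) < γbar := lt_trans one_pos hγbar1
  have hc : (0:ℝ) < 1 - 1/γbar := by
    have h1 : 1/γbar < 1 := by rw [div_lt_one hγb0]; exact hγbar1
    linarith
  have hcne : (1 - 1/γbar) ≠ 0 := ne_of_gt hc
  have hle : ∀ s', γ s' ≤ γbar := fun s' => hγbar.2 ⟨s', rfl⟩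
  have hratio1 : ∀ s', γ s' / γbar ≤ 1 := fun s' => (div_le_one hγb0).2 (hle s')
  have hratio0 : ∀ s', 0 ≤ γ s' / γbar := fun s' => div_nonneg (hγ0 s') hγb0.le
  refine ⟨?_, ?_, ?_, ?_, ?_⟩
  · intro s' θ
    rw [hπtil]
    exact mul_nonneg (div_nonneg (by linarith [hratio1 s']) hc.le) (hπ'0 s' θ)
  · intro θ
    have step : ∀ s' ∈ Finset.univ, πtil s' θ =
        (1/(1-1/γbar)) * π' s' θ - (1/((1-1/γbar)*γbar)) * (γ s' * π' s' θ) := by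
      intro s' _
      rw [hπtil]
      field_simp
    rw [Finset.sum_congr rfl step, Finset.sum_sub_distrib, ← Finset.mul_sum,
      ← Finset.mul_sum, hπ'1, hγ1]
    field_simp
    exact div_self (ne_of_gt (by linarith))
  · intro s' a
    rw [hσbar]
    have h1 : 0 ≤ ∑ s, φ s' s * σ s a :=
      Finset.sum_nonneg fun s _ => mul_nonneg (hφ0 s' s) (hσ0 s a)
    have := hratio1 s'
    exact add_nonneg (mul_nonneg (hratio0 s') h1)
      (mul_nonneg (by linarith) (hσ'0 s' a))
  · intro s'
    rw [hσbar]
    simp only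
    rw [Finset.sum_add_distrib, ← Finset.mul_sum, ← Finset.mul_sum, hσ'1,
      Finset.sum_comm]
    have : ∀ s ∈ Finset.univ, ∑ a, φ s' s * σ s a = φ s' s := by
      intro s _
      rw [← Finset.mul_sum, hσ1, mul_one]
    rw [Finset.sum_congr rfl this, hφ1]
    ring
  · -- payoff decomposition
    have hexp : ∀ s' θ, ∑ a, u a θ * σbar s' a
        = (γ s'/γbar) * (∑ s, φ s' s * (∑ a, u a θ * σ s a))
          + (1 - γ s'/γbar) * (∑ a, u a θ * σ' s' a) := by
      intro s' θ
      rw [hσbar]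
      simp only [mul_add, Finset.mul_sum, Finset.sum_add_distrib]
      congr 1
      · rw [Finset.sum_comm]
        exact Finset.sum_congr rfl fun s _ => Finset.sum_congr rfl fun a _ => by ring
      · exact Finset.sum_congr rfl fun a _ => by ring
    have key : ∀ s' θ, (∑ a, u a θ * σbar s' a) * π' s' θ * μ0 θ =
        (1/γbar) * (∑ s, (∑ a, u a θ * σ s a) * (φ s' s * γ s' * π' s' θ) * μ0 θ)
        + (1 - 1/γbar) * ((∑ a, u a θ * σ' s' a) * πtil s' θ * μ0 θ) := by
      intro s' θ
      rw [hexp s' θ, hπtil]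
      simp only
      rw [add_mul, add_mul]
      congr 1
      · rw [Finset.mul_sum, Finset.sum_mul, Finset.sum_mul, Finset.mul_sum]
        exact Finset.sum_congr rfl fun s _ => by ring
      · have hcd : (1 - 1/γbar) * ((1 - γ s'/γbar)/(1 - 1/γbar)) = 1 - γ s'/γbar := by
          rw [mul_comm]; exact div_mul_cancel₀ _ hcne
        calc ((1 - γ s'/γbar) * ∑ a, u a θ * σ' s' a) * π' s' θ * μ0 θ
            = ((1 - 1/γbar) * ((1 - γ s'/γbar)/(1 - 1/γbar)) * ∑ a, u a θ * σ' s' a)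
                * π' s' θ * μ0 θ := by rw [hcd]
          _ = (1 - 1/γbar) * ((∑ a, u a θ * σ' s' a)
                * ((1 - γ s'/γbar)/(1 - 1/γbar) * π' s' θ) * μ0 θ) := by ring
    calc ∑ s', ∑ θ, (∑ a, u a θ * σbar s' a) * π' s' θ * μ0 θ
        = ∑ s', ∑ θ, ((1/γbar) * (∑ s, (∑ a, u a θ * σ s a) * (φ s' s * γ s' * π' s' θ) * μ0 θ)
            + (1 - 1/γbar) * ((∑ a, u a θ * σ' s' a) * πtil s' θ * μ0 θ)) :=
          Finset.sum_congr rfl fun s' _ => Finset.sum_congr rfl fun θ _ => key s' θ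
      _ = (1/γbar) * (∑ s', ∑ θ, ∑ s, (∑ a, u a θ * σ s a) * (φ s' s * γ s' * π' s' θ) * μ0 θ)
            + (1 - 1/γbar) * (∑ s', ∑ θ, (∑ a, u a θ * σ' s' a) * πtil s' θ * μ0 θ) := by
          rw [Finset.mul_sum, Finset.mul_sum, ← Finset.sum_add_distrib]
          refine Finset.sum_congr rfl fun s' _ => ?_
          rw [Finset.mul_sum, Finset.mul_sum, ← Finset.sum_add_distrib]
      _ = (1 / γbar) * (∑ s, ∑ θ, (∑ a, u a θ * σ s a) * π s θ * μ0 θ)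
            + (1 - 1 / γbar) * (∑ s', ∑ θ, (∑ a, u a θ * σ' s' a) * πtil s' θ * μ0 θ) := by
          congr 1
          congr 1
          refine Eq.symm ?_
          calc ∑ s, ∑ θ, (∑ a, u a θ * σ s a) * π s θ * μ0 θ
              = ∑ s, ∑ θ, ∑ s', (∑ a, u a θ * σ s a) * (φ s' s * γ s' * π' s' θ) * μ0 θ := by
                refine Finset.sum_congr rfl fun s _ => Finset.sum_congr rfl fun θ _ => ?_
                rw [hwg s θ, Finset.mul_sum, Finset.sum_mul]
            _ = ∑ s, ∑ s', ∑ θ, (∑ a, u a θ * σ s a) * (φ s' s * γ s' * π' s' θ) * μ0 θ :=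
                Finset.sum_congr rfl fun s _ => Finset.sum_comm
            _ = ∑ s', ∑ s, ∑ θ, (∑ a, u a θ * σ s a) * (φ s' s * γ s' * π' s' θ) * μ0 θ :=
                Finset.sum_comm
            _ = ∑ s', ∑ θ, ∑ s, (∑ a, u a θ * σ s a) * (φ s' s * γ s' * π' s' θ) * μ0 θ :=
                Finset.sum_congr rfl fun s' _ => Finset.sum_comm
end

section
/- For any extreme point μ of the compact convex set η^∞_{ρ,Π}, there exist an extreme point μ' of η^∞_{ρ,Π} and a signal s ∈ S such that μ = r_{ρ,Π}(s|μ'). -/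
/-- One-step belief update r_{ρ,Π}(s|μ): here ρ θ θ' denotes the transition
probability ρ(θ'|θ) from θ to θ'. -/
noncomputable def update {Θ S : Type*} [Fintype Θ] (π : S → Θ → ℝ) (ρ : Θ → Θ → ℝ)
    (s : S) (μ : Θ → ℝ) : Θ → ℝ :=
  fun θ' => π s θ' * (∑ θ, ρ θ θ' * μ θ) / ∑ θ'', π s θ'' * ∑ θ, ρ θ θ'' * μ θ

/-- The map η_{ρ,Π} on subsets of beliefs:
η(X) = conv({ r_{ρ,Π}(s|μ) : s ∈ S, μ ∈ X }). -/
noncomputable def etaMap {Θ S : Type*} [Fintype Θ] (π : S → Θ → ℝ) (ρ : Θ → Θ → ℝ)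
    (X : Set (Θ → ℝ)) : Set (Θ → ℝ) :=
  convexHull ℝ {ν : Θ → ℝ | ∃ s : S, ∃ μ ∈ X, ν = update π ρ s μ}

/-- η^∞_{ρ,Π} = ⋂_{n ≥ 1} η^n_{ρ,Π}(Δ(Θ)). -/
noncomputable def etaInf {Θ S : Type*} [Fintype Θ] (π : S → Θ → ℝ) (ρ : Θ → Θ → ℝ) :
    Set (Θ → ℝ) :=
  ⋂ n : ℕ, (etaMap π ρ)^[n + 1] (stdSimplex ℝ Θ)

set_option linter.unusedSectionVars false
set_option linter.unusedVariables false
set_option maxHeartbeats 1000000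

open Set

section auxE

variable {E : Type*} [NormedAddCommGroup E] [NormedSpace ℝ E] [FiniteDimensional ℝ E]

/-- Convex hull of a compact set in a finite-dimensional normed space is compact. -/
theorem isCompact_convexHull' {K : Set E} (hK : IsCompact K) :
    IsCompact (convexHull ℝ K) := by
  rcases K.eq_empty_or_nonempty with rfl | ⟨k₀, hk₀⟩
  · simp
  classical
  set m := Module.finrank ℝ E + 1 with hm
  set f : (Fin m → ℝ) × (Fin m → E) → E := fun p => ∑ i, p.1 i • p.2 i with hf
  have hfc : Continuous f := by
    apply continuous_finset_sum
    intro i _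
    exact ((continuous_apply i).comp continuous_fst).smul
      ((continuous_apply i).comp continuous_snd)
  set T : Set ((Fin m → ℝ) × (Fin m → E)) :=
    (stdSimplex ℝ (Fin m)) ×ˢ (Set.univ.pi fun _ => K) with hT
  have hTc : IsCompact T :=
    (isCompact_stdSimplex ℝ _).prod (isCompact_univ_pi fun _ => hK)
  have himage : convexHull ℝ K = f '' T := by
    apply Subset.antisymm
    · intro x hx
      rw [convexHull_eq_union] at hx
      simp only [mem_iUnion] at hx
      obtain ⟨t, hts, hai, hxt⟩ := hx
      have htne : t.Nonempty := by
        rcases t.eq_empty_or_nonempty with rfl | h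
        · simp at hxt
        · exact h
      have hcard : t.card ≤ m := by
        have h1 := hai.card_le_finrank_succ
        rw [Fintype.card_coe] at h1
        exact h1.trans (by
          have := Submodule.finrank_le (vectorSpan ℝ (Set.range ((↑) : t → E)))
          omega)
      have hcpos : 0 < t.card := Finset.card_pos.2 htne
      -- enumerate t, padded to Fin m
      set e : Fin t.card → E := fun i => (t.equivFin.symm i : E) with he
      set v : Fin m → E := fun i => e ⟨min i.1 (t.card - 1), by omega⟩ with hv
      have hvK : ∀ i, v i ∈ K := fun i => hts (by simp [hv, he, Finset.coe_mem])
      have htv : (t : Set E) ⊆ Set.range v := by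
        intro y hy
        obtain ⟨i, hi⟩ := t.equivFin.symm.surjective ⟨y, hy⟩
        refine ⟨⟨i.1, by omega⟩, ?_⟩
        simp only [hv, he]
        have h2 : (⟨min i.1 (t.card - 1), by omega⟩ : Fin t.card) = i :=
          Fin.ext (by simp only []; omega)
        rw [h2, hi]
      have hxv : x ∈ convexHull ℝ (Set.range v) :=
        convexHull_mono htv hxt
      rw [convexHull_range_eq_exists_affineCombination] at hxv
      obtain ⟨s, w, hw0, hw1, hwx⟩ := hxv
      refine ⟨(fun i => if i ∈ s then w i else 0, v), ⟨?_, fun i _ => hvK i⟩, ?_⟩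
      · constructor
        · intro i
          by_cases h : i ∈ s <;> simp [h, hw0 i]
        · rw [Finset.sum_ite_mem, Finset.univ_inter, hw1]
      · rw [← hwx, s.affineCombination_eq_linear_combination _ _ hw1]
        simp only [hf]
        rw [← Finset.sum_subset (s.subset_univ)]
        · exact (Finset.sum_congr rfl fun i hi => by simp [hi]).symm
        · intro i _ hi
          simp [hi]
    · rintro _ ⟨⟨w, z⟩, ⟨⟨hw0, hw1⟩, hz⟩, rfl⟩
      exact (convex_convexHull ℝ K).sum_mem (fun i _ => hw0 i) hw1
        (fun i _ => subset_convexHull ℝ K (hz i (mem_univ i)))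
  rw [himage]
  exact hTc.image hfc

/-- For a decreasing sequence of nonempty compact sets, the intersection of the convex
hulls is contained in the convex hull of the intersection. -/
theorem iInter_convexHull_subset {K : ℕ → Set E} (hdec : ∀ n, K (n + 1) ⊆ K n)
    (hcomp : ∀ n, IsCompact (K n)) (hne : ∀ n, (K n).Nonempty) :
    (⋂ n, convexHull ℝ (K n)) ⊆ convexHull ℝ (⋂ n, K n) := by
  intro x hx
  by_contra hxc
  have hKinf : IsCompact (⋂ n, K n) :=
    (hcomp 0).of_isClosed_subset (isClosed_iInter fun n => (hcomp n).isClosed)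
      (iInter_subset _ 0)
  have hC : IsCompact (convexHull ℝ (⋂ n, K n)) := isCompact_convexHull' hKinf
  obtain ⟨f, u, hfu, hux⟩ :=
    geometric_hahn_banach_closed_point (convex_convexHull ℝ _) hC.isClosed hxc
  -- for some n, K n ⊆ {y | f y < u}
  have hex : ∃ n, K n ⊆ {y | f y < u} := by
    by_contra hno
    push_neg at hno
    have hne' : ∀ n, (K n ∩ {y | u ≤ f y}).Nonempty := by
      intro n
      obtain ⟨y, hy, hy2⟩ := Set.not_subset.1 (hno n)
      exact ⟨y, hy, show u ≤ f y from not_lt.1 hy2⟩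
    have hclosed : ∀ n, IsClosed (K n ∩ {y | u ≤ f y}) :=
      fun n => ((hcomp n).isClosed).inter (isClosed_le continuous_const f.continuous)
    have : (⋂ n, K n ∩ {y | u ≤ f y}).Nonempty := by
      apply IsCompact.nonempty_iInter_of_sequence_nonempty_isCompact_isClosed
      · exact fun n => inter_subset_inter (hdec n) (Subset.refl _)
      · exact hne'
      · exact (hcomp 0).inter_right (isClosed_le continuous_const f.continuous)
      · exact hclosed
    obtain ⟨y, hy⟩ := this
    simp only [mem_iInter, mem_inter_iff, mem_setOf_eq] at hy
    have hyK : y ∈ ⋂ n, K n := mem_iInter.2 fun n => (hy n).1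
    exact absurd (hfu y (subset_convexHull ℝ _ hyK)) (not_lt.2 (hy 0).2)
  obtain ⟨n, hn⟩ := hex
  have hconv : Convex ℝ {y : E | f y < u} :=
    (convex_Iio u).linear_preimage (f : E →ₗ[ℝ] ℝ)
  have : x ∈ {y : E | f y < u} :=
    convexHull_min hn hconv (mem_iInter.1 hx n)
  exact absurd hux (not_lt.2 (le_of_lt this))

/-- An extreme point of a convex set `A` that lies in the convex hull of `t ⊆ A`
must lie in `t`. -/
theorem extreme_mem_of_mem_convexHull {A t : Set E} (hA : Convex ℝ A)
    {x : E} (hx : x ∈ A.extremePoints ℝ) (ht : t ⊆ A) (hxt : x ∈ convexHull ℝ t) :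
    x ∈ t := by
  have hmem : x ∈ (convexHull ℝ t).extremePoints ℝ := by
    rw [mem_extremePoints]
    refine ⟨hxt, fun x₁ hx₁ x₂ hx₂ hseg => ?_⟩
    have hsub : convexHull ℝ t ⊆ A := convexHull_min ht hA
    exact (mem_extremePoints.1 hx).2 x₁ (hsub hx₁) x₂ (hsub hx₂) hseg
  exact extremePoints_convexHull_subset hmem

end auxE

section main

variable {Θ S : Type*} [Fintype Θ] [Nonempty Θ] [Fintype S] [Nonempty S]
variable (π : S → Θ → ℝ) (ρ : Θ → Θ → ℝ)

/-- numerator of the update -/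
noncomputable def nume (s : S) (μ : Θ → ℝ) : Θ → ℝ :=
  fun θ' => π s θ' * ∑ θ, ρ θ θ' * μ θ

/-- denominator of the update -/
noncomputable def deno (s : S) (μ : Θ → ℝ) : ℝ :=
  ∑ θ'', π s θ'' * ∑ θ, ρ θ θ'' * μ θ

lemma update_eq (s : S) (μ : Θ → ℝ) :
    update π ρ s μ = fun θ' => nume π ρ s μ θ' / deno π ρ s μ := rfl

lemma deno_eq_sum_nume (s : S) (μ : Θ → ℝ) :
    deno π ρ s μ = ∑ θ'', nume π ρ s μ θ'' := rfl

lemma nume_comb (s : S) (a b : ℝ) (μ ν : Θ → ℝ) :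
    nume π ρ s (a • μ + b • ν) =
      fun θ' => a * nume π ρ s μ θ' + b * nume π ρ s ν θ' := by
  funext θ'
  simp only [nume, Pi.add_apply, Pi.smul_apply, smul_eq_mul, mul_add,
    Finset.sum_add_distrib, Finset.mul_sum]
  ring_nf
  congr 1 <;> (apply Finset.sum_congr rfl; intros; ring)

lemma deno_comb (s : S) (a b : ℝ) (μ ν : Θ → ℝ) :
    deno π ρ s (a • μ + b • ν) = a * deno π ρ s μ + b * deno π ρ s ν := by
  simp only [deno_eq_sum_nume, nume_comb, Finset.mul_sum, Finset.sum_add_distrib]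

variable {π ρ}
variable (hπ0 : ∀ s θ, 0 < π s θ) (hρ0 : ∀ θ θ', 0 < ρ θ θ')

section pos
include hπ0 hρ0

lemma deno_pos {s : S} {μ : Θ → ℝ} (hμ : μ ∈ stdSimplex ℝ Θ) :
    0 < deno π ρ s μ := by
  obtain ⟨hμ0, hμ1⟩ := hμ
  have hex : ∃ θ₀, 0 < μ θ₀ := by
    by_contra h
    push_neg at h
    have : ∀ θ, μ θ = 0 := fun θ => le_antisymm (h θ) (hμ0 θ)
    simp [this] at hμ1
  obtain ⟨θ₀, hθ₀⟩ := hex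
  have hinner : ∀ θ'', 0 < ∑ θ, ρ θ θ'' * μ θ := fun θ'' =>
    Finset.sum_pos' (fun θ _ => mul_nonneg (hρ0 θ θ'').le (hμ0 θ))
      ⟨θ₀, Finset.mem_univ _, mul_pos (hρ0 θ₀ θ'') hθ₀⟩
  exact Finset.sum_pos (fun θ'' _ => mul_pos (hπ0 s θ'') (hinner θ''))
    Finset.univ_nonempty

lemma nume_nonneg {s : S} {μ : Θ → ℝ} (hμ : μ ∈ stdSimplex ℝ Θ) (θ' : Θ) :
    0 ≤ nume π ρ s μ θ' :=
  mul_nonneg (hπ0 s θ').le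
    (Finset.sum_nonneg fun θ _ => mul_nonneg (hρ0 θ θ').le (hμ.1 θ))

lemma update_mem_simplex {s : S} {μ : Θ → ℝ} (hμ : μ ∈ stdSimplex ℝ Θ) :
    update π ρ s μ ∈ stdSimplex ℝ Θ := by
  have hd := deno_pos hπ0 hρ0 (s := s) hμ
  constructor
  · intro θ'
    exact div_nonneg (nume_nonneg hπ0 hρ0 hμ θ') hd.le
  · rw [update_eq]
    rw [← Finset.sum_div, ← deno_eq_sum_nume, div_self hd.ne']

lemma update_eq_of_nume_eq {s : S} {ν x : Θ → ℝ} (hν : ν ∈ stdSimplex ℝ Θ)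
    (h : nume π ρ s ν = deno π ρ s ν • x) : update π ρ s ν = x := by
  have hd := deno_pos hπ0 hρ0 (s := s) hν
  funext θ'
  rw [update_eq]
  simp only []
  rw [congrFun h θ']
  simp only [Pi.smul_apply, smul_eq_mul]
  field_simp

lemma nume_eq_of_update_eq {s : S} {ν x : Θ → ℝ} (hν : ν ∈ stdSimplex ℝ Θ)
    (h : update π ρ s ν = x) : nume π ρ s ν = deno π ρ s ν • x := by
  have hd := deno_pos hπ0 hρ0 (s := s) hν
  funext θ'
  have := congrFun h θ'
  rw [update_eq] at this
  simp only [Pi.smul_apply, smul_eq_mul, ← this]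
  field_simp

/-- the projective combination trick -/
lemma update_openSegment {s : S} {ν₁ ν₂ : Θ → ℝ} (h₁ : ν₁ ∈ stdSimplex ℝ Θ)
    (h₂ : ν₂ ∈ stdSimplex ℝ Θ) {a b : ℝ} (ha : 0 < a) (hb : 0 < b) (hab : a + b = 1) :
    ∃ c d : ℝ, 0 < c ∧ 0 < d ∧ c + d = 1 ∧
      update π ρ s (a • ν₁ + b • ν₂) =
        c • update π ρ s ν₁ + d • update π ρ s ν₂ := by
  have hd₁ := deno_pos hπ0 hρ0 (s := s) h₁
  have hd₂ := deno_pos hπ0 hρ0 (s := s) h₂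
  set d₁ := deno π ρ s ν₁
  set d₂ := deno π ρ s ν₂
  have hD : 0 < a * d₁ + b * d₂ :=
    add_pos (mul_pos ha hd₁) (mul_pos hb hd₂)
  refine ⟨a * d₁ / (a * d₁ + b * d₂), b * d₂ / (a * d₁ + b * d₂),
    div_pos (mul_pos ha hd₁) hD, div_pos (mul_pos hb hd₂) hD, by field_simp, ?_⟩
  funext θ'
  simp only [update_eq, Pi.add_apply, Pi.smul_apply, smul_eq_mul,
    nume_comb, deno_comb]
  rw [show deno π ρ s ν₁ = d₁ from rfl, show deno π ρ s ν₂ = d₂ from rfl]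
  field_simp

end pos

variable (π ρ)

lemma etaMap_eq_iUnion (X : Set (Θ → ℝ)) :
    etaMap π ρ X = convexHull ℝ (⋃ s : S, update π ρ s '' X) := by
  unfold etaMap
  congr 1
  ext ν
  simp only [mem_setOf_eq, mem_iUnion, mem_image]
  constructor
  · rintro ⟨s, μ, hμ, rfl⟩; exact ⟨s, μ, hμ, rfl⟩
  · rintro ⟨s, μ, hμ, rfl⟩; exact ⟨s, μ, hμ, rfl⟩

lemma etaMap_mono {X Y : Set (Θ → ℝ)} (h : X ⊆ Y) : etaMap π ρ X ⊆ etaMap π ρ Y := by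
  apply convexHull_mono
  rintro ν ⟨s, μ, hμ, rfl⟩
  exact ⟨s, μ, h hμ, rfl⟩

lemma etaMap_nonempty {X : Set (Θ → ℝ)} (h : X.Nonempty) : (etaMap π ρ X).Nonempty := by
  obtain ⟨μ, hμ⟩ := h
  obtain ⟨s⟩ := ‹Nonempty S›
  exact ⟨update π ρ s μ, subset_convexHull ℝ _ ⟨s, μ, hμ, rfl⟩⟩

lemma continuous_nume (s : S) : Continuous (fun μ : Θ → ℝ => nume π ρ s μ) :=
  continuous_pi fun θ' => continuous_const.mul
    (continuous_finset_sum _ fun θ _ => continuous_const.mul (continuous_apply θ))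

lemma continuous_deno (s : S) : Continuous (fun μ : Θ → ℝ => deno π ρ s μ) :=
  continuous_finset_sum _ fun θ'' _ => continuous_const.mul
    (continuous_finset_sum _ fun θ _ => continuous_const.mul (continuous_apply θ))

variable {π ρ}

section pos2
include hπ0 hρ0

lemma continuousOn_update (s : S) :
    ContinuousOn (update π ρ s) (stdSimplex ℝ Θ) := by
  have heq : update π ρ s = fun μ => (deno π ρ s μ)⁻¹ • nume π ρ s μ := by
    funext μ θ'
    rw [update_eq]
    simp [div_eq_inv_mul]
  rw [heq]
  exact ContinuousOn.smul
    (((continuous_deno π ρ s).continuousOn).inv₀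
      fun μ hμ => (deno_pos hπ0 hρ0 hμ).ne')
    ((continuous_nume π ρ s).continuousOn)

lemma etaMap_subset_simplex {X : Set (Θ → ℝ)} (h : X ⊆ stdSimplex ℝ Θ) :
    etaMap π ρ X ⊆ stdSimplex ℝ Θ := by
  apply convexHull_min _ (convex_stdSimplex ℝ Θ)
  rintro ν ⟨s, μ, hμ, rfl⟩
  exact update_mem_simplex hπ0 hρ0 (h hμ)

lemma isCompact_etaMap {X : Set (Θ → ℝ)} (h : X ⊆ stdSimplex ℝ Θ)
    (hc : IsCompact X) : IsCompact (etaMap π ρ X) := by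
  rw [etaMap_eq_iUnion]
  exact isCompact_convexHull' (isCompact_iUnion fun s =>
    hc.image_of_continuousOn ((continuousOn_update hπ0 hρ0 s).mono h))

end pos2

end main

/-- Lemma D.1, item 2: for any extreme point μ of the compact convex set
η^∞_{ρ,Π}, there exist an extreme point μ' of η^∞_{ρ,Π} and a signal s ∈ S such that
μ = r_{ρ,Π}(s|μ'). -/
theorem extreme_point_is_update_of_extreme_point
    {Θ S : Type*} [Fintype Θ] [Nonempty Θ] [Fintype S] [Nonempty S]
    (π : S → Θ → ℝ) (hπ0 : ∀ s θ, 0 < π s θ) (hπ1 : ∀ θ, ∑ s, π s θ = 1)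
    (ρ : Θ → Θ → ℝ) (hρ0 : ∀ θ θ', 0 < ρ θ θ') (hρ1 : ∀ θ, ∑ θ', ρ θ θ' = 1) :
    ∀ μ ∈ (etaInf π ρ).extremePoints ℝ,
      ∃ μ' ∈ (etaInf π ρ).extremePoints ℝ, ∃ s : S, μ = update π ρ s μ' := by

  intro μ hμext
  set Δ : Set (Θ → ℝ) := stdSimplex ℝ Θ with hΔdef
  set X : ℕ → Set (Θ → ℝ) := fun n => (etaMap π ρ)^[n + 1] Δ with hXdef
  have hXsucc : ∀ n, X (n + 1) = etaMap π ρ (X n) := by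
    intro n
    simp only [hXdef]
    rw [Function.iterate_succ_apply']
  have hX0 : X 0 = etaMap π ρ Δ := rfl
  have hΔne : Δ.Nonempty := by
    refine ⟨fun _ => (Fintype.card Θ : ℝ)⁻¹, fun θ => by positivity, ?_⟩
    rw [Finset.sum_const, Finset.card_univ, nsmul_eq_mul]
    have : (0 : ℝ) < Fintype.card Θ := by
      have := Fintype.card_pos (α := Θ); positivity
    field_simp
  have hXΔ : ∀ n, X n ⊆ Δ := by
    intro n
    induction n with
    | zero => exact etaMap_subset_simplex hπ0 hρ0 subset_rfl
    | succ n ih => rw [hXsucc]; exact etaMap_subset_simplex hπ0 hρ0 ih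
  have hXc : ∀ n, IsCompact (X n) := by
    intro n
    induction n with
    | zero => exact isCompact_etaMap hπ0 hρ0 subset_rfl (isCompact_stdSimplex ℝ _)
    | succ n ih => rw [hXsucc]; exact isCompact_etaMap hπ0 hρ0 (hXΔ n) ih
  have hXne : ∀ n, (X n).Nonempty := by
    intro n
    induction n with
    | zero => exact etaMap_nonempty π ρ hΔne
    | succ n ih => rw [hXsucc]; exact etaMap_nonempty π ρ ih
  have hXconv : ∀ n, Convex ℝ (X n) := by
    intro n
    cases n with
    | zero => exact convex_convexHull ℝ _
    | succ n => rw [hXsucc]; exact convex_convexHull ℝ _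
  have hiter_mono : ∀ k (A B : Set (Θ → ℝ)), A ⊆ B →
      (etaMap π ρ)^[k] A ⊆ (etaMap π ρ)^[k] B := by
    intro k
    induction k with
    | zero => intro A B h; exact h
    | succ k ih =>
      intro A B h
      rw [Function.iterate_succ_apply, Function.iterate_succ_apply]
      exact ih _ _ (etaMap_mono π ρ h)
  have hXdec : ∀ n, X (n + 1) ⊆ X n := by
    intro n
    have h1 : X (n + 1) = (etaMap π ρ)^[n + 1] (etaMap π ρ Δ) := by
      simp only [hXdef]
      rw [← Function.iterate_succ_apply]
    rw [h1]
    exact hiter_mono (n + 1) _ _ (etaMap_subset_simplex hπ0 hρ0 subset_rfl)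
  have hXanti : Antitone X := antitone_nat_of_succ_le hXdec
  have hEdef : etaInf π ρ = ⋂ n, X n := rfl
  have hEΔ : etaInf π ρ ⊆ Δ := (iInter_subset X 0).trans (hXΔ 0)
  have hEclosed : IsClosed (etaInf π ρ) :=
    isClosed_iInter fun n => (hXc n).isClosed
  have hEc : IsCompact (etaInf π ρ) :=
    (hXc 0).of_isClosed_subset hEclosed (iInter_subset X 0)
  have hEconv : Convex ℝ (etaInf π ρ) := convex_iInter fun n => hXconv n
  -- easy fixed point direction
  have hfix : etaMap π ρ (etaInf π ρ) ⊆ etaInf π ρ := by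
    rw [hEdef]
    apply subset_iInter
    intro n
    refine (etaMap_mono π ρ (iInter_subset X n)).trans ?_
    rw [← hXsucc n]
    exact hXdec n
  have hBsub : {ν : Θ → ℝ | ∃ s : S, ∃ μ' ∈ etaInf π ρ, ν = update π ρ s μ'} ⊆
      etaInf π ρ := (subset_convexHull ℝ _).trans hfix
  -- the compact base sets
  set K : ℕ → Set (Θ → ℝ) := fun n => ⋃ s : S, update π ρ s '' X n with hKdef
  have hKc : ∀ n, IsCompact (K n) := fun n => isCompact_iUnion fun s =>
    (hXc n).image_of_continuousOn ((continuousOn_update hπ0 hρ0 s).mono (hXΔ n))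
  have hKdec : ∀ n, K (n + 1) ⊆ K n := fun n =>
    iUnion_mono fun s => image_mono (hXdec n)
  have hKne : ∀ n, (K n).Nonempty := by
    intro n
    obtain ⟨ν, hν⟩ := hXne n
    obtain ⟨s⟩ := ‹Nonempty S›
    exact ⟨update π ρ s ν, mem_iUnion.2 ⟨s, ν, hν, rfl⟩⟩
  -- intersection of base sets maps into the base set of etaInf
  have hKinter : (⋂ n, K n) ⊆
      {ν : Θ → ℝ | ∃ s : S, ∃ μ₀ ∈ etaInf π ρ, ν = update π ρ s μ₀} := by
    intro x hx
    have hx' : ∀ n, ∃ s : S, x ∈ update π ρ s '' X n := fun n =>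
      mem_iUnion.1 (mem_iInter.1 hx n)
    choose sn hsn using hx'
    obtain ⟨s, hs⟩ := Finite.exists_infinite_fiber sn
    have hsinf : (sn ⁻¹' {s}).Infinite := Set.infinite_coe_iff.1 hs
    have hall : ∀ n, ∃ ν ∈ X n, nume π ρ s ν = deno π ρ s ν • x := by
      intro n
      obtain ⟨m, hm, hnm⟩ := hsinf.exists_gt n
      have hms : sn m = s := hm
      have : x ∈ update π ρ s '' X m := by rw [← hms]; exact hsn m
      obtain ⟨ν, hν, hνx⟩ := this
      exact ⟨ν, hXanti hnm.le hν,
        nume_eq_of_update_eq hπ0 hρ0 (hXΔ m hν) hνx⟩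
    set C : ℕ → Set (Θ → ℝ) :=
      fun n => X n ∩ {ν | nume π ρ s ν = deno π ρ s ν • x} with hCdef
    have hclosed : IsClosed {ν : Θ → ℝ | nume π ρ s ν = deno π ρ s ν • x} :=
      isClosed_eq (continuous_nume π ρ s) ((continuous_deno π ρ s).smul continuous_const)
    have hCne : ∀ n, (C n).Nonempty := by
      intro n; obtain ⟨ν, h1, h2⟩ := hall n; exact ⟨ν, h1, h2⟩
    have : (⋂ n, C n).Nonempty := by
      apply IsCompact.nonempty_iInter_of_sequence_nonempty_isCompact_isClosed
      · exact fun n => inter_subset_inter (hXdec n) Subset.rfl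
      · exact hCne
      · exact (hXc 0).inter_right hclosed
      · exact fun n => (hXc n).isClosed.inter hclosed
    obtain ⟨ν, hν⟩ := this
    have hν1 : ν ∈ etaInf π ρ := by
      rw [hEdef, mem_iInter]
      exact fun n => (mem_iInter.1 hν n).1
    have hν2 : nume π ρ s ν = deno π ρ s ν • x := (mem_iInter.1 hν 0).2
    exact ⟨s, ν, hν1, (update_eq_of_nume_eq hπ0 hρ0 (hEΔ hν1) hν2).symm⟩
  -- the hard fixed point direction applied to μ
  have hμE : μ ∈ etaInf π ρ := hμext.1
  have hμK : ∀ n, μ ∈ convexHull ℝ (K n) := by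
    intro n
    have : μ ∈ X (n + 1) := (hEdef ▸ hμE : μ ∈ ⋂ n, X n) |> mem_iInter.1 |> (· (n + 1))
    rw [hXsucc, etaMap_eq_iUnion] at this
    exact this
  have hμconv : μ ∈ convexHull ℝ (⋂ n, K n) :=
    iInter_convexHull_subset hKdec hKc hKne (mem_iInter.2 hμK)
  have hμeta : μ ∈ convexHull ℝ
      {ν : Θ → ℝ | ∃ s : S, ∃ μ₀ ∈ etaInf π ρ, ν = update π ρ s μ₀} :=
    convexHull_mono hKinter hμconv
  -- μ is itself an update of some point of etaInf
  have hμB : μ ∈ {ν : Θ → ℝ | ∃ s : S, ∃ μ₀ ∈ etaInf π ρ, ν = update π ρ s μ₀} :=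
    extreme_mem_of_mem_convexHull hEconv hμext hBsub hμeta
  obtain ⟨s, μ₀, hμ₀, hμeq⟩ := hμB
  -- the fiber of μ inside etaInf
  set C : Set (Θ → ℝ) := etaInf π ρ ∩ {ν | nume π ρ s ν = deno π ρ s ν • μ} with hCdef
  have hCclosed : IsClosed {ν : Θ → ℝ | nume π ρ s ν = deno π ρ s ν • μ} :=
    isClosed_eq (continuous_nume π ρ s) ((continuous_deno π ρ s).smul continuous_const)
  have hCc : IsCompact C := hEc.inter_right hCclosed
  have hCne : C.Nonempty :=
    ⟨μ₀, hμ₀, nume_eq_of_update_eq hπ0 hρ0 (hEΔ hμ₀) hμeq.symm⟩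
  obtain ⟨μ', hμ'ext⟩ := hCc.extremePoints_nonempty hCne
  have hμ'C : μ' ∈ C := hμ'ext.1
  have hμ'E : μ' ∈ etaInf π ρ := hμ'C.1
  have hupdate : update π ρ s μ' = μ :=
    update_eq_of_nume_eq hπ0 hρ0 (hEΔ hμ'E) hμ'C.2
  refine ⟨μ', ?_, s, hupdate.symm⟩
  rw [mem_extremePoints]
  refine ⟨hμ'E, fun ν₁ hν₁ ν₂ hν₂ hseg => ?_⟩
  obtain ⟨a, b, ha, hb, hab, habμ'⟩ := hseg
  obtain ⟨c, d, hc, hd, hcd, hcomb⟩ :=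
    update_openSegment hπ0 hρ0 (s := s) (hEΔ hν₁) (hEΔ hν₂) ha hb hab
  have hu₁ : update π ρ s ν₁ ∈ etaInf π ρ := hBsub ⟨s, ν₁, hν₁, rfl⟩
  have hu₂ : update π ρ s ν₂ ∈ etaInf π ρ := hBsub ⟨s, ν₂, hν₂, rfl⟩
  have hμseg : μ ∈ openSegment ℝ (update π ρ s ν₁) (update π ρ s ν₂) :=
    ⟨c, d, hc, hd, hcd, by rw [← hcomb, habμ', hupdate]⟩
  obtain ⟨he₁, he₂⟩ := (mem_extremePoints.1 hμext).2 _ hu₁ _ hu₂ hμseg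
  have hν₁C : ν₁ ∈ C := ⟨hν₁, nume_eq_of_update_eq hπ0 hρ0 (hEΔ hν₁) he₁⟩
  have hν₂C : ν₂ ∈ C := ⟨hν₂, nume_eq_of_update_eq hπ0 hρ0 (hEΔ hν₂) he₂⟩
  exact (mem_extremePoints.1 hμ'ext).2 ν₁ hν₁C ν₂ hν₂C ⟨a, b, ha, hb, hab, habμ'⟩
end
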